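/- arXiv:2604.02005 — 7 statements merged into one kernel-verified Lean document; each statement's English description precedes it below -/
import Mathlib

section
/- Let ψ : ℕ → ℝ≥0 be monotonically decreasing and suppose limsup_{N→∞} ∑_{N < n ≤ 2^N} ψ(n) > C for some constant C > 0. Then for every real c > 1 there exists a constant κ_c > 0 (depending only on c) such that limsup_{R→∞} ∑_{2^R ≤ n ≤ 2^(c^R)} ψ(n) ≥ κ_c · C. -/
open Filter Finset

lemma aux_growth (c : ℝ) (hc : 1 < c) (a b : ℝ) :
    ∀ᶠ m : ℕ in Filter.atTop, a * m + b ≤ c ^ m := by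
  have hc0 : 0 < c := lt_trans one_pos hc
  have hA : (0:ℝ) < |a| + 1 := by positivity
  have h0 : Filter.Tendsto (fun m : ℕ ↦ (m : ℝ) * (1/c) ^ m) atTop (nhds 0) := by
    apply tendsto_self_mul_const_pow_of_abs_lt_one
    rw [abs_of_nonneg (by positivity), div_lt_one hc0]; linarith
  have h1 : ∀ᶠ m : ℕ in atTop, (m : ℝ) * (1/c) ^ m < 1 / (|a| + 1) :=
    h0.eventually (eventually_lt_nhds (show (0:ℝ) < 1/(|a|+1) by positivity))
  have h2 : ∀ᶠ m : ℕ in atTop, |b| ≤ (m : ℝ) :=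
    tendsto_natCast_atTop_atTop.eventually_ge_atTop |b|
  filter_upwards [h1, h2] with m hm1 hm2
  have hcm : (0:ℝ) < c ^ m := by positivity
  have key : (|a| + 1) * m ≤ c ^ m := by
    rw [div_pow, one_pow, mul_one_div] at hm1
    have h4 := hm1.le
    rw [div_le_div_iff₀ hcm hA] at h4
    linarith
  have hm0 : (0:ℝ) ≤ m := Nat.cast_nonneg m
  have := le_abs_self a; have := le_abs_self b
  nlinarith

lemma aux_sum_union (ψ : ℕ → ℝ) (hψ : ∀ n, 0 ≤ ψ n) {A B C : Finset ℕ} (h : A ⊆ B ∪ C) :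
    ∑ n ∈ A, ψ n ≤ ∑ n ∈ B, ψ n + ∑ n ∈ C, ψ n := by
  refine (Finset.sum_le_sum_of_subset_of_nonneg h (fun i _ _ => hψ i)).trans ?_
  have h1 := Finset.sum_union_inter (s₁ := B) (s₂ := C) (f := ψ)
  have h2 : (0:ℝ) ≤ ∑ n ∈ B ∩ C, ψ n := Finset.sum_nonneg (fun i _ => hψ i)
  linarith

lemma aux_cover {a b a' b' a'' b'' : ℕ} (h1 : a' ≤ a) (h2 : b ≤ b'') (h3 : a'' ≤ b' + 1) :
    Finset.Icc a b ⊆ Finset.Icc a' b' ∪ Finset.Icc a'' b'' := by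
  intro n hn
  simp only [Finset.mem_Icc, Finset.mem_union] at *
  omega

/-- If ψ : ℕ → ℝ is nonincreasing, nonnegative, and
`limsup_{N→∞} ∑_{N < n ≤ 2^N} ψ(n) > C` for some `C > 0`, then for every `c > 1`
there is `κ_c > 0` depending only on `c` with
`limsup_{R→∞} ∑_{2^R ≤ n ≤ 2^(c^R)} ψ(n) ≥ κ_c · C`. -/
theorem stmt_0 :
    ∀ c : ℝ, 1 < c → ∃ κ : ℝ, 0 < κ ∧
      ∀ (ψ : ℕ → ℝ) (C : ℝ), 0 < C →
        (∀ n, 0 ≤ ψ n) →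
        (∀ m n : ℕ, m ≤ n → ψ n ≤ ψ m) →
        C < Filter.limsup (fun N : ℕ => ∑ n ∈ Finset.Ioc N (2 ^ N), ψ n) Filter.atTop →
        κ * C ≤ Filter.limsup
          (fun R : ℕ => ∑ n ∈ Finset.Icc (2 ^ R) ⌊(2 : ℝ) ^ (c ^ R)⌋₊, ψ n)
          Filter.atTop := by
  intro c hc
  have hc0 : (0:ℝ) < c := lt_trans one_pos hc
  refine ⟨1/2, by norm_num, ?_⟩
  intro ψ C hC hψ0 hmono hlim
  set T : ℕ → ℝ := fun N : ℕ => ∑ n ∈ Finset.Ioc N (2 ^ N), ψ n with hTdef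
  set S : ℕ → ℝ := fun R : ℕ => ∑ n ∈ Finset.Icc (2 ^ R) ⌊(2 : ℝ) ^ (c ^ R)⌋₊, ψ n with hSdef
  obtain ⟨d, hd⟩ := pow_unbounded_of_one_lt (2:ℝ) hc
  obtain ⟨e, he⟩ := pow_unbounded_of_one_lt c (one_lt_two (α := ℝ))
  have hd1 : 0 < d := by
    rcases Nat.eq_zero_or_pos d with h | h
    · rw [h] at hd; norm_num at hd
    · exact h
  -- rewrite T via Icc
  have hTIcc : ∀ N : ℕ, T N = ∑ n ∈ Finset.Icc (N + 1) (2 ^ N), ψ n := by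
    intro N
    rw [hTdef]
    rw [Finset.Icc_add_one_left_eq_Ioc]
  -- T is bounded above eventually
  have hTbdd : Filter.IsBoundedUnder (· ≤ ·) Filter.atTop T := by
    by_contra hb
    have hemp : {a : ℝ | ∀ᶠ N in atTop, T N ≤ a} = ∅ := by
      ext a
      simp only [Set.mem_setOf_eq, Set.mem_empty_iff_false, iff_false]
      intro ha
      exact hb ⟨a, by simpa [Filter.eventually_map] using ha⟩
    rw [Filter.limsup_eq, hemp, Real.sInf_empty] at hlim
    linarith
  obtain ⟨A, hA⟩ := hTbdd
  rw [Filter.eventually_map] at hA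
  obtain ⟨K₁, hK₁⟩ := Filter.eventually_atTop.mp hA
  obtain ⟨K₂, hK₂⟩ := Filter.eventually_atTop.mp (aux_growth 2 one_lt_two (e:ℝ) 1)
  obtain ⟨K₃, hK₃⟩ := Filter.eventually_atTop.mp (aux_growth c hc (d:ℝ) (d:ℝ))
  -- S is bounded above
  have hSbdd : Filter.IsBoundedUnder (· ≤ ·) Filter.atTop S := by
    refine ⟨A + A, ?_⟩
    rw [Filter.eventually_map, Filter.eventually_atTop]
    refine ⟨max (max 1 K₂) K₁, fun R hR => ?_⟩
    have hR1 : 1 ≤ R := le_trans (le_trans (le_max_left 1 K₂) (le_max_left _ K₁)) hR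
    have hRK2 : K₂ ≤ R := le_trans (le_trans (le_max_right 1 K₂) (le_max_left _ K₁)) hR
    have hRK1 : K₁ ≤ R := le_trans (le_max_right _ K₁) hR
    set N₀ : ℕ := 2 ^ R - 1 with hN₀
    set N₁ : ℕ := 2 ^ N₀ with hN₁
    have hRN₀ : R ≤ N₀ := by
      have := Nat.lt_two_pow_self (n := R)
      omega
    have hN₀N₁ : N₀ ≤ N₁ := (Nat.lt_two_pow_self (n := N₀)).le
    -- e * R ≤ N₀
    have heR : e * R ≤ N₀ := by
      have h1 := hK₂ R hRK2
      have h2 : ((e * R + 1 : ℕ) : ℝ) ≤ ((2 ^ R : ℕ) : ℝ) := by push_cast; linarith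
      have h3 : e * R + 1 ≤ 2 ^ R := Nat.cast_le.mp h2
      omega
    -- floor bound
    have hfloor : ⌊(2:ℝ) ^ (c ^ R)⌋₊ ≤ 2 ^ N₁ := by
      have hcR : c ^ R ≤ (N₁ : ℝ) := by
        have s1 : c ^ R ≤ ((2:ℝ) ^ e) ^ R := pow_le_pow_left₀ hc0.le he.le R
        have s2 : ((2:ℝ) ^ e) ^ R = (2:ℝ) ^ (e * R) := by rw [← pow_mul]
        have s3 : (2:ℝ) ^ (e * R) ≤ (2:ℝ) ^ N₀ := pow_le_pow_right₀ one_le_two heR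
        have s4 : ((N₁ : ℕ) : ℝ) = (2:ℝ) ^ N₀ := by rw [hN₁]; push_cast; ring
        rw [s4]; linarith
      have h5 : (2:ℝ) ^ (c ^ R) ≤ (2:ℝ) ^ ((N₁ : ℕ) : ℝ) :=
        Real.rpow_le_rpow_of_exponent_le one_le_two hcR
      rw [Real.rpow_natCast] at h5
      have h6 : (⌊(2:ℝ) ^ (c ^ R)⌋₊ : ℝ) ≤ (2:ℝ) ^ N₁ :=
        le_trans (Nat.floor_le (Real.rpow_pos_of_pos two_pos _).le) h5
      have h7 : ((2 ^ N₁ : ℕ) : ℝ) = (2:ℝ) ^ N₁ := by push_cast; ring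
      rw [← h7] at h6
      exact Nat.cast_le.mp h6
    -- covering
    have hsub : Finset.Icc (2 ^ R) ⌊(2:ℝ) ^ (c ^ R)⌋₊ ⊆
        Finset.Icc (N₀ + 1) (2 ^ N₀) ∪ Finset.Icc (N₁ + 1) (2 ^ N₁) := by
      apply aux_cover
      · have : 1 ≤ 2 ^ R := Nat.one_le_two_pow
        omega
      · exact hfloor
      · rw [hN₁]
    have hcov : S R ≤ T N₀ + T N₁ := by
      rw [hTIcc N₀, hTIcc N₁, hSdef]
      exact aux_sum_union ψ hψ0 hsub
    have hT0 : T N₀ ≤ A := hK₁ N₀ (le_trans hRK1 hRN₀)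
    have hT1 : T N₁ ≤ A := hK₁ N₁ (le_trans (le_trans hRK1 hRN₀) hN₀N₁)
    linarith
  -- frequently C < T N
  have hcob : Filter.IsCoboundedUnder (· ≤ ·) Filter.atTop T := by
    apply Filter.IsCoboundedUnder.of_frequently_ge (a := 0)
    apply Filter.Eventually.frequently
    filter_upwards with N
    exact Finset.sum_nonneg (fun i _ => hψ0 i)
  have hfreq : ∃ᶠ N in atTop, C < T N := Filter.frequently_lt_of_lt_limsup hcob hlim
  -- conclude
  refine Filter.le_limsup_of_frequently_le ?_ hSbdd
  rw [Filter.frequently_atTop]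
  intro B0
  obtain ⟨N, hNge, hTN⟩ := Filter.frequently_atTop.mp hfreq (2 ^ max B0 K₃ + 1)
  have hpow1 : 1 ≤ 2 ^ max B0 K₃ := Nat.one_le_two_pow
  have hN0 : N ≠ 0 := by omega
  set R₀ : ℕ := Nat.log 2 N with hR₀def
  have hR₀ : max B0 K₃ ≤ R₀ :=
    (Nat.le_log_iff_pow_le one_lt_two hN0).mpr (by omega)
  have hcR₀nn : (0:ℝ) ≤ c ^ R₀ := by positivity
  set R₁ : ℕ := ⌊c ^ R₀⌋₊ with hR₁def
  have hg : (d:ℝ) * R₀ + d ≤ c ^ R₀ := hK₃ R₀ (le_trans (le_max_right B0 K₃) hR₀)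
  have hdR : d * (R₀ + 1) ≤ R₁ := by
    apply Nat.le_floor
    push_cast
    linarith
  have hR01 : R₀ + 1 ≤ R₁ := le_trans (Nat.le_mul_of_pos_left _ hd1) hdR
  -- coverage conditions
  have cov1 : 2 ^ R₀ ≤ N := Nat.pow_log_le_self 2 hN0
  have cov2 : 2 ^ R₁ ≤ ⌊(2:ℝ) ^ (c ^ R₀)⌋₊ := by
    apply Nat.le_floor
    have s1 : ((2 ^ R₁ : ℕ) : ℝ) = (2:ℝ) ^ ((R₁ : ℕ) : ℝ) := by
      rw [Real.rpow_natCast]; push_cast; ring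
    rw [s1]
    exact Real.rpow_le_rpow_of_exponent_le one_le_two (Nat.floor_le hcR₀nn)
  have cov3 : 2 ^ N ≤ ⌊(2:ℝ) ^ (c ^ R₁)⌋₊ := by
    apply Nat.le_floor
    have s1 : ((2 ^ N : ℕ) : ℝ) = (2:ℝ) ^ ((N : ℕ) : ℝ) := by
      rw [Real.rpow_natCast]; push_cast; ring
    rw [s1]
    apply Real.rpow_le_rpow_of_exponent_le one_le_two
    have t1 : (N:ℝ) ≤ (2:ℝ) ^ (R₀ + 1) := by
      have := Nat.lt_pow_succ_log_self (show 1 < 2 by norm_num) N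
      have h2 : ((N:ℕ):ℝ) ≤ ((2 ^ (R₀ + 1) : ℕ) : ℝ) := Nat.cast_le.mpr this.le
      push_cast at h2
      exact h2
    have t2 : (2:ℝ) ^ (R₀ + 1) ≤ (c ^ d) ^ (R₀ + 1) := pow_le_pow_left₀ (by norm_num) hd.le _
    have t3 : (c ^ d) ^ (R₀ + 1) = c ^ (d * (R₀ + 1)) := by rw [← pow_mul]
    have t4 : c ^ (d * (R₀ + 1)) ≤ c ^ R₁ := pow_le_pow_right₀ hc.le hdR
    linarith
  -- sum inequality
  have hsub : Finset.Icc (N + 1) (2 ^ N) ⊆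
      Finset.Icc (2 ^ R₀) ⌊(2:ℝ) ^ (c ^ R₀)⌋₊ ∪ Finset.Icc (2 ^ R₁) ⌊(2:ℝ) ^ (c ^ R₁)⌋₊ := by
    apply aux_cover
    · omega
    · exact cov3
    · omega
  have hsum : T N ≤ S R₀ + S R₁ := by
    rw [hTIcc N, hSdef]
    exact aux_sum_union ψ hψ0 hsub
  rcases le_or_gt (1/2 * C) (S R₀) with h | h
  · exact ⟨R₀, le_trans (le_max_left B0 K₃) hR₀, h⟩
  · refine ⟨R₁, ?_, by linarith⟩
    have : B0 ≤ R₀ := le_trans (le_max_left B0 K₃) hR₀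
    omega
end

section
/- Let (q_n) be a sequence of positive reals with q_{n+1}/q_n ≥ 10 for all n, let j ≥ 1, ℓ a positive integer, and B_ℓ ∈ ℝ. Define c(h) := min(1, 2^{j+1}/h) for h ∈ ℕ. Then ∑_{0 ≤ r} ∑_{1 ≤ h,k ≤ 2^{2j}, |k·(q_{ℓ+r}/q_ℓ) − h − B_ℓ| < 1/4} c(h)c(k) ≤ 10 · 2^j. -/
open Finset

lemma min_le_sqrt {x : ℝ} (hx : 0 ≤ x) : min 1 x ≤ Real.sqrt x := by
  rcases le_total x 1 with h | h
  · rw [min_eq_right h]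
    nth_rewrite 1 [← Real.sqrt_sq hx]
    exact Real.sqrt_le_sqrt (by nlinarith)
  · rw [min_eq_left h, show (1:ℝ) = Real.sqrt 1 from Real.sqrt_one.symm]
    exact Real.sqrt_le_sqrt h

lemma sum_inv_sqrt_le (n : ℕ) : ∑ m ∈ Icc 1 n, (1:ℝ)/Real.sqrt m ≤ 2 * Real.sqrt n := by
  induction n with
  | zero => simp
  | succ n ih =>
    rw [Finset.sum_Icc_succ_top (by omega : 1 ≤ n+1)]
    have ht : (0:ℝ) < Real.sqrt ((n:ℝ)+1) := Real.sqrt_pos.mpr (by positivity)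
    have hsq : Real.sqrt (n:ℝ) ^ 2 = (n:ℝ) := Real.sq_sqrt (by positivity)
    have htq : Real.sqrt ((n:ℝ)+1) ^ 2 = (n:ℝ)+1 := Real.sq_sqrt (by positivity)
    have key : 1 / Real.sqrt ((n:ℝ)+1) ≤ 2*Real.sqrt ((n:ℝ)+1) - 2*Real.sqrt (n:ℝ) := by
      rw [div_le_iff₀ ht]
      nlinarith [sq_nonneg (Real.sqrt ((n:ℝ)+1) - Real.sqrt (n:ℝ)), Real.sqrt_nonneg (n:ℝ)]
    have hcast : ((n+1 : ℕ):ℝ) = (n:ℝ)+1 := by push_cast; ring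
    rw [hcast]
    linarith

lemma sum_pow32_helper (a : ℕ) (ha : 1 ≤ a) :
    ∀ d : ℕ, ∑ m ∈ Icc (a+1) (a+d), (1:ℝ)/(m * Real.sqrt m)
      ≤ 2/Real.sqrt a - 2/Real.sqrt ((a:ℝ)+(d:ℝ)) := by
  intro d
  induction d with
  | zero => simp
  | succ d ih =>
    rw [show a + (d+1) = (a+d) + 1 from by omega,
      Finset.sum_Icc_succ_top (by omega : a + 1 ≤ a + d + 1)]
    have hc1 : ((a + d + 1 : ℕ) : ℝ) = ((a:ℝ)+d) + 1 := by push_cast; ring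
    rw [hc1]
    have ha1 : (1:ℝ) ≤ (a:ℝ) := Nat.one_le_cast.mpr ha
    have hd0 : (0:ℝ) ≤ (d:ℝ) := Nat.cast_nonneg d
    set x : ℝ := (a:ℝ) + d with hx
    have hx1 : (1:ℝ) ≤ x := by rw [hx]; linarith
    have hs : (0:ℝ) < Real.sqrt x := Real.sqrt_pos.mpr (by linarith)
    have ht : (0:ℝ) < Real.sqrt (x+1) := Real.sqrt_pos.mpr (by linarith)
    have hsq : Real.sqrt x ^ 2 = x := Real.sq_sqrt (by linarith)
    have htq : Real.sqrt (x+1) ^ 2 = x+1 := Real.sq_sqrt (by linarith)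
    have hlt : Real.sqrt x ≤ Real.sqrt (x+1) := Real.sqrt_le_sqrt (by linarith)
    have key : 1/((x+1) * Real.sqrt (x+1)) ≤ 2/Real.sqrt x - 2/Real.sqrt (x+1) := by
      rw [div_sub_div _ _ (ne_of_gt hs) (ne_of_gt ht), div_le_div_iff₀ (by positivity) (by positivity)]
      nlinarith [mul_pos hs ht, sq_nonneg (Real.sqrt (x+1) - Real.sqrt x),
        mul_le_mul_of_nonneg_left hlt (le_of_lt hs)]
    have hgoal : ((a:ℝ) + (d+1:ℕ)) = x + 1 := by rw [hx]; push_cast; ring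
    push_cast only [Nat.cast_add, Nat.cast_one]
    rw [show (a:ℝ) + ((d:ℝ) + 1) = x + 1 from by rw [hx]; ring]
    linarith

lemma sum_pow32_le (a : ℕ) (ha : 1 ≤ a) (n : ℕ) :
    ∑ m ∈ Icc (a+1) n, (1:ℝ)/(m * Real.sqrt m) ≤ 2/Real.sqrt a := by
  rcases le_or_gt n a with h | h
  · rw [Finset.Icc_eq_empty (by omega)]; simp; positivity
  · have h2 : n = a + (n - a) := by omega
    rw [h2]
    have := sum_pow32_helper a ha (n - a)
    have hpos : (0:ℝ) ≤ 2/Real.sqrt ((a:ℝ) + ((n-a : ℕ):ℝ)) := by positivity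
    linarith

lemma sum_telescope_helper (a : ℕ) (ha : 1 ≤ a) :
    ∀ d : ℕ, ∑ m ∈ Icc (a+1) (a+d), (1:ℝ)/((m:ℝ) * ((m:ℝ)-1))
      ≤ 1/(a:ℝ) - 1/((a:ℝ)+(d:ℝ)) := by
  intro d
  induction d with
  | zero => simp
  | succ d ih =>
    rw [show a + (d+1) = (a+d) + 1 from by omega,
      Finset.sum_Icc_succ_top (by omega : a + 1 ≤ a + d + 1)]
    have hc1 : ((a + d + 1 : ℕ) : ℝ) = ((a:ℝ)+d) + 1 := by push_cast; ring
    rw [hc1]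
    have ha1 : (1:ℝ) ≤ (a:ℝ) := Nat.one_le_cast.mpr ha
    have hd0 : (0:ℝ) ≤ (d:ℝ) := Nat.cast_nonneg d
    set x : ℝ := (a:ℝ) + d with hx
    have hx1 : (1:ℝ) ≤ x := by rw [hx]; linarith
    have key : 1/((x+1) * ((x+1)-1)) = 1/x - 1/(x+1) := by
      field_simp
      rw [show x + 1 - 1 = x by ring, div_self (show x ≠ 0 by linarith)]; ring
    push_cast only [Nat.cast_add, Nat.cast_one]
    rw [show (a:ℝ) + ((d:ℝ) + 1) = x + 1 from by rw [hx]; ring]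
    linarith

lemma sum_telescope_le (a : ℕ) (ha : 1 ≤ a) (n : ℕ) :
    ∑ m ∈ Icc (a+1) n, (1:ℝ)/((m:ℝ) * ((m:ℝ)-1)) ≤ 1/(a:ℝ) := by
  rcases le_or_gt n a with h | h
  · rw [Finset.Icc_eq_empty (by omega)]; simp only [Finset.sum_empty]; positivity
  · have h2 : n = a + (n - a) := by omega
    rw [h2]
    have := sum_telescope_helper a ha (n - a)
    have hpos : (0:ℝ) ≤ 1/((a:ℝ) + ((n-a:ℕ):ℝ)) := by positivity
    linarith

lemma sum_c_inv_sqrt_le (a : ℕ) (ha : 1 ≤ a) (n : ℕ) :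
    ∑ m ∈ Icc 1 n, min 1 ((a:ℝ)/m) * (1/Real.sqrt m) ≤ 4*Real.sqrt a := by
  have ha0 : (0:ℝ) < (a:ℝ) := by exact_mod_cast Nat.pos_of_ne_zero (by omega)
  rw [← Finset.sum_filter_add_sum_filter_not (Icc 1 n) (fun m => m ≤ a)]
  have h1 : ∑ m ∈ (Icc 1 n).filter (fun m => m ≤ a), min 1 ((a:ℝ)/m) * (1/Real.sqrt m)
      ≤ 2*Real.sqrt a := by
    calc ∑ m ∈ (Icc 1 n).filter (fun m => m ≤ a), min 1 ((a:ℝ)/m) * (1/Real.sqrt m)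
        ≤ ∑ m ∈ (Icc 1 n).filter (fun m => m ≤ a), (1:ℝ)/Real.sqrt m := by
          apply Finset.sum_le_sum
          intro m hm
          have h0 : (0:ℝ) ≤ 1/Real.sqrt m := by positivity
          nlinarith [min_le_left (1:ℝ) ((a:ℝ)/m)]
      _ ≤ ∑ m ∈ Icc 1 a, (1:ℝ)/Real.sqrt m := by
          apply Finset.sum_le_sum_of_subset_of_nonneg
          · intro m hm
            simp only [Finset.mem_filter, Finset.mem_Icc] at *
            omega
          · intro m _ _; positivity
      _ ≤ 2*Real.sqrt a := sum_inv_sqrt_le a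
  have h2 : ∑ m ∈ (Icc 1 n).filter (fun m => ¬ m ≤ a), min 1 ((a:ℝ)/m) * (1/Real.sqrt m)
      ≤ 2*Real.sqrt a := by
    calc ∑ m ∈ (Icc 1 n).filter (fun m => ¬ m ≤ a), min 1 ((a:ℝ)/m) * (1/Real.sqrt m)
        ≤ ∑ m ∈ (Icc 1 n).filter (fun m => ¬ m ≤ a), (a:ℝ) * (1/((m:ℝ)*Real.sqrt m)) := by
          apply Finset.sum_le_sum
          intro m hm
          simp only [Finset.mem_filter, Finset.mem_Icc] at hm
          have hmpos : (0:ℝ) < (m:ℝ) := by exact_mod_cast (by omega : 0 < m)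
          have hsm : (0:ℝ) < Real.sqrt m := Real.sqrt_pos.mpr hmpos
          have hmin : min 1 ((a:ℝ)/m) ≤ (a:ℝ)/m := min_le_right _ _
          have h0 : (0:ℝ) ≤ 1/Real.sqrt m := by positivity
          calc min 1 ((a:ℝ)/m) * (1/Real.sqrt m) ≤ ((a:ℝ)/m) * (1/Real.sqrt m) := by
                nlinarith
            _ = (a:ℝ) * (1/((m:ℝ)*Real.sqrt m)) := by field_simp
      _ ≤ ∑ m ∈ Icc (a+1) n, (a:ℝ) * (1/((m:ℝ)*Real.sqrt m)) := by
          apply Finset.sum_le_sum_of_subset_of_nonneg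
          · intro m hm
            simp only [Finset.mem_filter, Finset.mem_Icc] at *
            omega
          · intro m _ _
            have : (0:ℝ) ≤ (m:ℝ) := Nat.cast_nonneg m
            positivity
      _ = (a:ℝ) * ∑ m ∈ Icc (a+1) n, (1/((m:ℝ)*Real.sqrt m)) := by rw [Finset.mul_sum]
      _ ≤ (a:ℝ) * (2/Real.sqrt a) := by
          apply mul_le_mul_of_nonneg_left (sum_pow32_le a ha n) (by positivity)
      _ = 2*Real.sqrt a := by
          rw [show (a:ℝ) * (2/Real.sqrt a) = 2 * ((a:ℝ)/Real.sqrt a) from by ring,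
            Real.div_sqrt]
  linarith

lemma sum_c_sq_le (a : ℕ) (ha : 1 ≤ a) (n : ℕ) :
    ∑ m ∈ Icc 1 n, (min 1 ((a:ℝ)/m))^2 ≤ 2*(a:ℝ) := by
  have ha0 : (0:ℝ) < (a:ℝ) := by exact_mod_cast Nat.pos_of_ne_zero (by omega)
  rw [← Finset.sum_filter_add_sum_filter_not (Icc 1 n) (fun m => m ≤ a)]
  have h1 : ∑ m ∈ (Icc 1 n).filter (fun m => m ≤ a), (min 1 ((a:ℝ)/m))^2 ≤ (a:ℝ) := by
    calc ∑ m ∈ (Icc 1 n).filter (fun m => m ≤ a), (min 1 ((a:ℝ)/m))^2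
        ≤ ∑ m ∈ (Icc 1 n).filter (fun m => m ≤ a), 1 := by
          apply Finset.sum_le_sum
          intro m hm
          have h0 : (0:ℝ) ≤ min 1 ((a:ℝ)/m) := le_min zero_le_one (by positivity)
          nlinarith [min_le_left (1:ℝ) ((a:ℝ)/m)]
      _ = (((Icc 1 n).filter (fun m => m ≤ a)).card : ℝ) := by simp
      _ ≤ ((Icc 1 a).card : ℝ) := by
          apply Nat.cast_le.mpr
          apply Finset.card_le_card
          intro m hm
          simp only [Finset.mem_filter, Finset.mem_Icc] at *
          omega
      _ ≤ (a:ℝ) := by simp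
  have h2 : ∑ m ∈ (Icc 1 n).filter (fun m => ¬ m ≤ a), (min 1 ((a:ℝ)/m))^2 ≤ (a:ℝ) := by
    calc ∑ m ∈ (Icc 1 n).filter (fun m => ¬ m ≤ a), (min 1 ((a:ℝ)/m))^2
        ≤ ∑ m ∈ (Icc 1 n).filter (fun m => ¬ m ≤ a), (a:ℝ)^2 * (1/((m:ℝ)*((m:ℝ)-1))) := by
          apply Finset.sum_le_sum
          intro m hm
          simp only [Finset.mem_filter, Finset.mem_Icc] at hm
          have hm1 : ((a:ℝ)+1) ≤ (m:ℝ) := by exact_mod_cast (by omega : a+1 ≤ m)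
          have hmpos : (0:ℝ) < (m:ℝ) := by linarith
          have hmm : (0:ℝ) < (m:ℝ) - 1 := by linarith
          have hb : (min 1 ((a:ℝ)/m))^2 ≤ ((a:ℝ)/m)^2 := by
            have h0 : (0:ℝ) ≤ min 1 ((a:ℝ)/m) := le_min zero_le_one (by positivity)
            nlinarith [min_le_right (1:ℝ) ((a:ℝ)/m)]
          refine hb.trans ?_
          rw [div_pow, mul_one_div, div_le_div_iff₀ (by positivity) (by positivity)]
          nlinarith
      _ ≤ ∑ m ∈ Icc (a+1) n, (a:ℝ)^2 * (1/((m:ℝ)*((m:ℝ)-1))) := by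
          apply Finset.sum_le_sum_of_subset_of_nonneg
          · intro m hm
            simp only [Finset.mem_filter, Finset.mem_Icc] at *
            omega
          · intro m hm _
            simp only [Finset.mem_Icc] at hm
            have hm1 : ((a:ℝ)+1) ≤ (m:ℝ) := by exact_mod_cast (by omega : a+1 ≤ m)
            have hmm : (0:ℝ) < (m:ℝ) - 1 := by linarith
            have hmpos : (0:ℝ) < (m:ℝ) := by linarith
            positivity
      _ = (a:ℝ)^2 * ∑ m ∈ Icc (a+1) n, (1/((m:ℝ)*((m:ℝ)-1))) := by rw [Finset.mul_sum]
      _ ≤ (a:ℝ)^2 * (1/(a:ℝ)) := by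
          apply mul_le_mul_of_nonneg_left (sum_telescope_le a ha n) (by positivity)
      _ = (a:ℝ) := by field_simp
  linarith

lemma r0_bound {B : ℝ} {Mn N : ℕ} (hMn : 1 ≤ Mn) (A : Finset (ℕ×ℕ))
    (hA : ∀ p ∈ A, (1 ≤ p.1 ∧ p.1 ≤ N) ∧ (1 ≤ p.2 ∧ p.2 ≤ N))
    (hcond : ∀ p ∈ A, |(p.2:ℝ) - (p.1:ℝ) - B| < 1/4) :
    ∑ p ∈ A, min 1 ((Mn:ℝ)/p.1) * min 1 ((Mn:ℝ)/p.2) ≤ 2*(Mn:ℝ) := by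
  have hMn0 : (0:ℝ) < (Mn:ℝ) := by exact_mod_cast Nat.pos_of_ne_zero (by omega)
  -- the difference p.1 - p.2 is a constant integer over A
  have hd : ∀ p ∈ A, ∀ p' ∈ A, (p.1:ℤ) - (p.2:ℤ) = (p'.1:ℤ) - (p'.2:ℤ) := by
    intro p hp p' hp'
    have h1 := abs_lt.mp (hcond p hp)
    have h2 := abs_lt.mp (hcond p' hp')
    have c1 : ((p.1:ℤ):ℝ) - ((p.2:ℤ):ℝ) < ((p'.1:ℤ):ℝ) - ((p'.2:ℤ):ℝ) + 1 := by
      push_cast; linarith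
    have c2 : ((p'.1:ℤ):ℝ) - ((p'.2:ℤ):ℝ) < ((p.1:ℤ):ℝ) - ((p.2:ℤ):ℝ) + 1 := by
      push_cast; linarith
    have d1 : (p.1:ℤ) - (p.2:ℤ) < (p'.1:ℤ) - (p'.2:ℤ) + 1 := by exact_mod_cast c1
    have d2 : (p'.1:ℤ) - (p'.2:ℤ) < (p.1:ℤ) - (p.2:ℤ) + 1 := by exact_mod_cast c2
    omega
  have hinj : ∀ p ∈ A, ∀ p' ∈ A, min p.1 p.2 = min p'.1 p'.2 → p = p' := by
    intro p hp p' hp' hmin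
    have := hd p hp p' hp'
    have h1 : p.1 = p'.1 ∧ p.2 = p'.2 := by
      rw [min_def, min_def] at hmin
      split_ifs at hmin <;> omega
    exact Prod.ext h1.1 h1.2
  calc ∑ p ∈ A, min 1 ((Mn:ℝ)/p.1) * min 1 ((Mn:ℝ)/p.2)
      ≤ ∑ p ∈ A, (min 1 ((Mn:ℝ)/(min p.1 p.2)))^2 := by
        apply Finset.sum_le_sum
        intro p hp
        obtain ⟨⟨h11, _⟩, ⟨h21, _⟩⟩ := hA p hp
        have hp1 : (0:ℝ) < (p.1:ℝ) := by exact_mod_cast h11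
        have hp2 : (0:ℝ) < (p.2:ℝ) := by exact_mod_cast h21
        rcases le_total p.1 p.2 with h | h
        · rw [min_eq_left h]
          have hcast : (p.1:ℝ) ≤ (p.2:ℝ) := by exact_mod_cast h
          have hmono : min 1 ((Mn:ℝ)/p.2) ≤ min 1 ((Mn:ℝ)/p.1) := by
            apply min_le_min le_rfl
            apply div_le_div_of_nonneg_left (le_of_lt hMn0) hp1 hcast
          have h0 : (0:ℝ) ≤ min 1 ((Mn:ℝ)/p.1) := le_min zero_le_one (by positivity)
          nlinarith
        · rw [min_eq_right h]
          have hcast : (p.2:ℝ) ≤ (p.1:ℝ) := by exact_mod_cast h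
          have hmono : min 1 ((Mn:ℝ)/p.1) ≤ min 1 ((Mn:ℝ)/p.2) := by
            apply min_le_min le_rfl
            apply div_le_div_of_nonneg_left (le_of_lt hMn0) hp2 hcast
          have h0 : (0:ℝ) ≤ min 1 ((Mn:ℝ)/p.2) := le_min zero_le_one (by positivity)
          nlinarith
    _ = ∑ m ∈ A.image (fun p => min p.1 p.2), (min 1 ((Mn:ℝ)/m))^2 := by
        rw [Finset.sum_image hinj]
    _ ≤ ∑ m ∈ Icc 1 N, (min 1 ((Mn:ℝ)/m))^2 := by
        apply Finset.sum_le_sum_of_subset_of_nonneg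
        · intro m hm
          obtain ⟨p, hp, rfl⟩ := Finset.mem_image.mp hm
          obtain ⟨⟨h11, h12⟩, ⟨h21, h22⟩⟩ := hA p hp
          simp only [Finset.mem_Icc]
          omega
        · intro m _ _; positivity
    _ ≤ 2*(Mn:ℝ) := sum_c_sq_le Mn hMn N

noncomputable def fbd (Mq Qr : ℝ) (i : ℕ) : ℝ := if i = 0 then 1 else
  min 1 (Mq/i) * (Real.sqrt Mq / (Real.sqrt Qr * Real.sqrt i))

lemma fbd_zero (Mq Qr : ℝ) : fbd Mq Qr 0 = 1 := by simp [fbd]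

lemma fbd_of_ne (Mq Qr : ℝ) {i : ℕ} (h : i ≠ 0) :
    fbd Mq Qr i = min 1 (Mq/i) * (Real.sqrt Mq / (Real.sqrt Qr * Real.sqrt i)) := by
  simp [fbd, h]

lemma fbd_nonneg {Mq Qr : ℝ} (hM : 0 ≤ Mq) (i : ℕ) : 0 ≤ fbd Mq Qr i := by
  rcases eq_or_ne i 0 with rfl | h
  · rw [fbd_zero]; norm_num
  · rw [fbd_of_ne _ _ h]
    have h0 : (0:ℝ) ≤ min 1 (Mq/i) := le_min zero_le_one (by positivity)
    positivity

lemma per_r_bound {B Qr : ℝ} (hQr : 10 ≤ Qr) {Mn N : ℕ} (hMn : 1 ≤ Mn) (A : Finset (ℕ×ℕ))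
    (hA : ∀ p ∈ A, (1 ≤ p.1 ∧ p.1 ≤ N) ∧ (1 ≤ p.2 ∧ p.2 ≤ N))
    (hcond : ∀ p ∈ A, |(p.2:ℝ)*Qr - (p.1:ℝ) - B| < 1/4) :
    ∑ p ∈ A, min 1 ((Mn:ℝ)/p.1) * min 1 ((Mn:ℝ)/p.2)
      ≤ 1 + 4*(Mn:ℝ)/Real.sqrt Qr := by
  have hMn0 : (0:ℝ) < (Mn:ℝ) := by exact_mod_cast Nat.pos_of_ne_zero (by omega)
  have hQpos : (0:ℝ) < Qr := by linarith
  have hsQ : (0:ℝ) < Real.sqrt Qr := Real.sqrt_pos.mpr hQpos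
  rcases A.eq_empty_or_nonempty with rfl | hne
  · simp only [Finset.sum_empty]; positivity
  have himg : (A.image Prod.snd).Nonempty := hne.image _
  set k₀ := (A.image Prod.snd).min' himg with hk₀
  obtain ⟨p₀, hp₀A, hp₀⟩ := Finset.mem_image.mp ((A.image Prod.snd).min'_mem himg)
  have hkmin : ∀ p ∈ A, k₀ ≤ p.2 := fun p hp =>
    Finset.min'_le _ _ (Finset.mem_image_of_mem _ hp)
  have hinj : ∀ p ∈ A, ∀ p' ∈ A, p.2 = p'.2 → p = p' := by
    intro p hp p' hp' hsnd
    have h1 := abs_lt.mp (hcond p hp)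
    have h2 := abs_lt.mp (hcond p' hp')
    rw [hsnd] at h1
    have c1 : (p.1:ℝ) < (p'.1:ℝ) + 1 := by linarith
    have c2 : (p'.1:ℝ) < (p.1:ℝ) + 1 := by linarith
    have d1 : p.1 < p'.1 + 1 := by exact_mod_cast c1
    have d2 : p'.1 < p.1 + 1 := by exact_mod_cast c2
    exact Prod.ext (by omega) hsnd
  have hpt : ∀ p ∈ A, min 1 ((Mn:ℝ)/p.1) * min 1 ((Mn:ℝ)/p.2) ≤ fbd (Mn:ℝ) Qr (p.2 - k₀) := by
    intro p hp
    obtain ⟨⟨h11, h12⟩, ⟨h21, h22⟩⟩ := hA p hp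
    have hp1pos : (0:ℝ) < (p.1:ℝ) := by exact_mod_cast h11
    have hp2pos : (0:ℝ) < (p.2:ℝ) := by exact_mod_cast h21
    have hn1 : (0:ℝ) ≤ min 1 ((Mn:ℝ)/p.1) := le_min zero_le_one (by positivity)
    have hn2 : (0:ℝ) ≤ min 1 ((Mn:ℝ)/p.2) := le_min zero_le_one (by positivity)
    by_cases hi : p.2 - k₀ = 0
    · rw [hi, fbd_zero]
      have hb1 : min 1 ((Mn:ℝ)/p.1) ≤ 1 := min_le_left _ _
      have hb2 : min 1 ((Mn:ℝ)/p.2) ≤ 1 := min_le_left _ _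
      nlinarith
    · rw [fbd_of_ne _ _ hi]
      set i : ℕ := p.2 - k₀ with hidef
      have hk0p : k₀ ≤ p.2 := hkmin p hp
      have hile : i ≤ p.2 := by omega
      have hi1 : 1 ≤ i := by omega
      have hicast : (1:ℝ) ≤ (i:ℝ) := by exact_mod_cast hi1
      have hipos : (0:ℝ) < (i:ℝ) := by linarith
      have hp2cast : (p.2:ℝ) = (k₀:ℝ) + (i:ℝ) := by
        rw [hidef]; push_cast [Nat.cast_sub hk0p]; ring
      have h1 := abs_lt.mp (hcond p hp)
      have h2 := abs_lt.mp (hcond p₀ hp₀A)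
      rw [hp₀, ← hk₀] at h2
      have hp01 : (1:ℝ) ≤ (p₀.1:ℝ) := by exact_mod_cast (hA p₀ hp₀A).1.1
      have hkey : (i:ℝ) * Qr < (p.1:ℝ) := by nlinarith
      have hb1 : min 1 ((Mn:ℝ)/p.1) ≤ Real.sqrt Mn / (Real.sqrt Qr * Real.sqrt i) := by
        have hiQpos : (0:ℝ) < (i:ℝ)*Qr := by positivity
        have step1 : min 1 ((Mn:ℝ)/p.1) ≤ min 1 ((Mn:ℝ)/((i:ℝ)*Qr)) := by
          apply min_le_min le_rfl
          apply div_le_div_of_nonneg_left (le_of_lt hMn0) hiQpos (le_of_lt hkey)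
        refine step1.trans ((min_le_sqrt (by positivity)).trans ?_)
        rw [Real.sqrt_div (le_of_lt hMn0), Real.sqrt_mul (by positivity : (0:ℝ) ≤ (i:ℝ)),
          mul_comm (Real.sqrt i) (Real.sqrt Qr)]
      have hb2 : min 1 ((Mn:ℝ)/p.2) ≤ min 1 ((Mn:ℝ)/i) := by
        apply min_le_min le_rfl
        apply div_le_div_of_nonneg_left (le_of_lt hMn0) hipos (by exact_mod_cast hile)
      have hnn : (0:ℝ) ≤ Real.sqrt Mn / (Real.sqrt Qr * Real.sqrt i) := by positivity
      calc min 1 ((Mn:ℝ)/p.1) * min 1 ((Mn:ℝ)/p.2)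
          ≤ (Real.sqrt Mn / (Real.sqrt Qr * Real.sqrt i)) * min 1 ((Mn:ℝ)/i) :=
            mul_le_mul hb1 hb2 hn2 hnn
        _ = min 1 ((Mn:ℝ)/i) * (Real.sqrt Mn / (Real.sqrt Qr * Real.sqrt i)) := by ring
  have hchain : ∑ p ∈ A, min 1 ((Mn:ℝ)/p.1) * min 1 ((Mn:ℝ)/p.2)
      ≤ ∑ i ∈ Icc 0 N, fbd (Mn:ℝ) Qr i := by
    calc ∑ p ∈ A, min 1 ((Mn:ℝ)/p.1) * min 1 ((Mn:ℝ)/p.2)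
        ≤ ∑ p ∈ A, fbd (Mn:ℝ) Qr (p.2 - k₀) := Finset.sum_le_sum hpt
      _ = ∑ k ∈ A.image Prod.snd, fbd (Mn:ℝ) Qr (k - k₀) := by
          rw [Finset.sum_image hinj]
      _ ≤ ∑ k ∈ Icc k₀ (k₀ + N), fbd (Mn:ℝ) Qr (k - k₀) := by
          apply Finset.sum_le_sum_of_subset_of_nonneg
          · intro k hk
            obtain ⟨p, hp, rfl⟩ := Finset.mem_image.mp hk
            simp only [Finset.mem_Icc]
            exact ⟨hkmin p hp, by have := (hA p hp).2.2; omega⟩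
          · intro k _ _; exact fbd_nonneg (le_of_lt hMn0) _
      _ = ∑ i ∈ Icc 0 N, fbd (Mn:ℝ) Qr i := by
          rw [show Icc k₀ (k₀+N) = Icc (k₀+0) (k₀+N) from by rw [Nat.add_zero],
            ← Finset.map_add_left_Icc 0 N k₀, Finset.sum_map]
          apply Finset.sum_congr rfl
          intro i _
          congr 1
          simp [addLeftEmbedding_apply]
  have hsplit : ∑ i ∈ Icc 0 N, fbd (Mn:ℝ) Qr i
      = 1 + ∑ i ∈ Icc 1 N, fbd (Mn:ℝ) Qr i := by
    rw [show Icc 0 N = insert 0 (Icc 1 N) from by ext m; simp [Finset.mem_Icc]; omega]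
    rw [Finset.sum_insert (by simp), fbd_zero]
  have htail : ∑ i ∈ Icc 1 N, fbd (Mn:ℝ) Qr i ≤ 4*(Mn:ℝ)/Real.sqrt Qr := by
    have heq : ∀ i ∈ Icc 1 N, fbd (Mn:ℝ) Qr i =
        (Real.sqrt Mn / Real.sqrt Qr) * (min 1 ((Mn:ℝ)/i) * (1/Real.sqrt i)) := by
      intro i hi
      simp only [Finset.mem_Icc] at hi
      rw [fbd_of_ne _ _ (by omega)]
      have hipos : (0:ℝ) < (i:ℝ) := by exact_mod_cast (by omega : 0 < i)
      have hsi : (0:ℝ) < Real.sqrt i := Real.sqrt_pos.mpr hipos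
      field_simp
    rw [Finset.sum_congr rfl heq, ← Finset.mul_sum]
    have hb := sum_c_inv_sqrt_le Mn hMn N
    have hnn : (0:ℝ) ≤ Real.sqrt Mn / Real.sqrt Qr := by positivity
    calc (Real.sqrt Mn / Real.sqrt Qr) * ∑ i ∈ Icc 1 N, min 1 ((Mn:ℝ)/i) * (1/Real.sqrt i)
        ≤ (Real.sqrt Mn / Real.sqrt Qr) * (4*Real.sqrt Mn) := by
          apply mul_le_mul_of_nonneg_left hb hnn
      _ = 4*(Mn:ℝ)/Real.sqrt Qr := by
          rw [div_mul_eq_mul_div, show Real.sqrt Mn * (4*Real.sqrt Mn)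
            = 4*(Real.sqrt Mn * Real.sqrt Mn) from by ring,
            Real.mul_self_sqrt (le_of_lt hMn0)]
  calc ∑ p ∈ A, min 1 ((Mn:ℝ)/p.1) * min 1 ((Mn:ℝ)/p.2)
      ≤ ∑ i ∈ Icc 0 N, fbd (Mn:ℝ) Qr i := hchain
    _ = 1 + ∑ i ∈ Icc 1 N, fbd (Mn:ℝ) Qr i := hsplit
    _ ≤ 1 + 4*(Mn:ℝ)/Real.sqrt Qr := by linarith

set_option maxHeartbeats 2000000 in
/-- For a sequence of positive reals with `q_{n+1}/q_n ≥ 10`, `j ≥ 1`,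
`ℓ ≥ 1` and `B_ℓ ∈ ℝ`, with `c(h) = min(1, 2^{j+1}/h)`, the sum
`∑_{r ≥ 0} ∑_{1 ≤ h,k ≤ 2^{2j}, |k q_{ℓ+r}/q_ℓ − h − B_ℓ| < 1/4} c(h) c(k)`
is at most `10 · 2^j` (stated via uniformly bounded partial sums in `r`). -/
theorem stmt_4 (q : ℕ → ℝ) (hqpos : ∀ n, 0 < q n) (hq : ∀ n, 10 ≤ q (n + 1) / q n)
    (j : ℕ) (hj : 1 ≤ j) (ℓ : ℕ) (hℓ : 1 ≤ ℓ) (B : ℝ)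
    (c : ℕ → ℝ) (hc : ∀ h : ℕ, c h = min 1 ((2 : ℝ) ^ (j + 1) / h)) :
    ∀ R : ℕ,
      ∑ r ∈ Finset.range R,
        ∑ p ∈ (Finset.Icc 1 (2 ^ (2 * j)) ×ˢ Finset.Icc 1 (2 ^ (2 * j))).filter
          (fun p : ℕ × ℕ =>
            |(p.2 : ℝ) * (q (ℓ + r) / q ℓ) - (p.1 : ℝ) - B| < 1 / 4),
          c p.1 * c p.2
      ≤ 10 * 2 ^ j := by
  intro R
  set N : ℕ := 2 ^ (2 * j) with hN
  set Mn : ℕ := 2 ^ (j + 1) with hMn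
  have hMn1 : 1 ≤ Mn := Nat.one_le_two_pow
  have hMncast : ((Mn:ℕ):ℝ) = (2:ℝ)^(j+1) := by rw [hMn]; push_cast; ring
  have hMpos : (0:ℝ) < (Mn:ℝ) := by rw [hMncast]; positivity
  have hcM : ∀ h : ℕ, c h = min 1 ((Mn:ℝ)/h) := by intro h; rw [hc, hMncast]
  set Q : ℕ → ℝ := fun r => q (ℓ + r) / q ℓ with hQ
  have hQpos : ∀ r, 0 < Q r := fun r => div_pos (hqpos _) (hqpos _)
  have hgrow : ∀ a s : ℕ, (10:ℝ)^s * q a ≤ q (a + s) := by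
    intro a s
    induction s with
    | zero => simp
    | succ s ih =>
      have h1 : 10 * q (a+s) ≤ q (a+s+1) := by
        have h2 := hq (a+s)
        rw [le_div_iff₀ (hqpos (a+s))] at h2
        linarith
      have h3 : (0:ℝ) < (10:ℝ)^s := by positivity
      calc (10:ℝ)^(s+1) * q a = 10 * ((10:ℝ)^s * q a) := by ring
        _ ≤ 10 * q (a+s) := by linarith
        _ ≤ q (a + (s+1)) := by rw [show a + (s+1) = a+s+1 from rfl]; exact h1
  have hQmono : ∀ r₀ r : ℕ, r₀ ≤ r → (10:ℝ)^(r - r₀) * Q r₀ ≤ Q r := by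
    intro r₀ r hle
    have := hgrow (ℓ + r₀) (r - r₀)
    rw [show ℓ + r₀ + (r - r₀) = ℓ + r from by omega] at this
    rw [hQ]
    dsimp only
    rw [show (10:ℝ)^(r-r₀) * (q (ℓ+r₀) / q ℓ) = ((10:ℝ)^(r-r₀) * q (ℓ+r₀)) / q ℓ from by ring]
    exact div_le_div_of_nonneg_right this (le_of_lt (hqpos ℓ))
  have hQge : ∀ r : ℕ, (10:ℝ)^r ≤ Q r := by
    intro r
    have := hQmono 0 r (Nat.zero_le r)
    have hQ0 : Q 0 = 1 := by rw [hQ]; dsimp only; rw [Nat.add_zero]; exact div_self (ne_of_gt (hqpos ℓ))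
    rw [hQ0, Nat.sub_zero, mul_one] at this
    exact this
  -- abbreviate the pair sets
  set A : ℕ → Finset (ℕ × ℕ) := fun r =>
    (Finset.Icc 1 N ×ˢ Finset.Icc 1 N).filter
      (fun p : ℕ × ℕ => |(p.2 : ℝ) * (q (ℓ + r) / q ℓ) - (p.1 : ℝ) - B| < 1 / 4) with hA
  have hAfacts : ∀ r, ∀ p ∈ A r, ((1 ≤ p.1 ∧ p.1 ≤ N) ∧ (1 ≤ p.2 ∧ p.2 ≤ N))
      ∧ |(p.2:ℝ) * Q r - (p.1:ℝ) - B| < 1/4 := by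
    intro r p hp
    rw [hA] at hp
    simp only [Finset.mem_filter, Finset.mem_product, Finset.mem_Icc] at hp
    exact ⟨⟨hp.1.1, hp.1.2⟩, hp.2⟩
  -- rewrite the goal
  have hgoal : ∑ r ∈ Finset.range R,
      ∑ p ∈ (Finset.Icc 1 (2 ^ (2 * j)) ×ˢ Finset.Icc 1 (2 ^ (2 * j))).filter
        (fun p : ℕ × ℕ => |(p.2 : ℝ) * (q (ℓ + r) / q ℓ) - (p.1 : ℝ) - B| < 1 / 4),
        c p.1 * c p.2
      = ∑ r ∈ Finset.range R, ∑ p ∈ A r, min 1 ((Mn:ℝ)/p.1) * min 1 ((Mn:ℝ)/p.2) := by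
    apply Finset.sum_congr rfl
    intro r _
    apply Finset.sum_congr rfl
    intro p _
    rw [hcM, hcM]
  rw [hgoal]
  have hQ0 : Q 0 = 1 := by
    rw [hQ]; dsimp only; rw [Nat.add_zero]; exact div_self (ne_of_gt (hqpos ℓ))
  rcases Nat.eq_zero_or_pos R with rfl | hR
  · rw [Finset.range_zero, Finset.sum_empty]; positivity
  rw [Finset.range_eq_Ico, Finset.sum_eq_sum_Ico_succ_bot hR]
  -- r = 0 term
  have hS0 : ∑ p ∈ A 0, min 1 ((Mn:ℝ)/p.1) * min 1 ((Mn:ℝ)/p.2) ≤ 2*(Mn:ℝ) := by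
    apply r0_bound hMn1
    · intro p hp; exact (hAfacts 0 p hp).1
    · intro p hp
      have h := (hAfacts 0 p hp).2
      rw [hQ0, mul_one] at h
      exact h
  -- sqrt 10 facts
  have hs10 : (0:ℝ) < Real.sqrt 10 := Real.sqrt_pos.mpr (by norm_num)
  have hs10sq : Real.sqrt 10 ^ 2 = 10 := Real.sq_sqrt (by norm_num)
  have hs10ge : (3:ℝ) ≤ Real.sqrt 10 := by nlinarith
  -- bound for r ≥ 1
  have hSr : ∀ r ∈ Finset.Ico 1 R, ∑ p ∈ A r, min 1 ((Mn:ℝ)/p.1) * min 1 ((Mn:ℝ)/p.2)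
      ≤ (if (A r).Nonempty then (1:ℝ) else 0) + 4*(Mn:ℝ) * (1/Real.sqrt 10)^r := by
    intro r hr
    simp only [Finset.mem_Ico] at hr
    by_cases hAne : (A r).Nonempty
    · rw [if_pos hAne]
      have h10r : (10:ℝ)^r ≤ Q r := hQge r
      have h10 : (10:ℝ) ≤ (10:ℝ)^r := by
        calc (10:ℝ) = 10^1 := by norm_num
          _ ≤ 10^r := pow_le_pow_right₀ (by norm_num) hr.1
      have hQr10 : (10:ℝ) ≤ Q r := le_trans h10 h10r
      have hmain := per_r_bound hQr10 hMn1 (A r)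
        (fun p hp => (hAfacts r p hp).1) (fun p hp => (hAfacts r p hp).2)
      have hsqrtpow : (Real.sqrt 10)^r ≤ Real.sqrt (Q r) := by
        have hsp : ∀ s : ℕ, Real.sqrt ((10:ℝ)^s) = (Real.sqrt 10)^s := by
          intro s
          induction s with
          | zero => simp
          | succ s ih =>
            rw [pow_succ, pow_succ, Real.sqrt_mul (by positivity) 10, ih]
        rw [← hsp r]
        exact Real.sqrt_le_sqrt h10r
      have hspos : (0:ℝ) < (Real.sqrt 10)^r := by positivity
      have htail : 4*(Mn:ℝ)/Real.sqrt (Q r) ≤ 4*(Mn:ℝ) * (1/Real.sqrt 10)^r := by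
        rw [one_div_pow, mul_one_div]
        exact div_le_div_of_nonneg_left (by positivity) hspos hsqrtpow
      linarith
    · rw [if_neg hAne, Finset.not_nonempty_iff_eq_empty.mp hAne, Finset.sum_empty]
      positivity
  -- sum the per-r bounds
  have hsum1 : ∑ r ∈ Finset.Ico 1 R, ∑ p ∈ A r, min 1 ((Mn:ℝ)/p.1) * min 1 ((Mn:ℝ)/p.2)
      ≤ ∑ r ∈ Finset.Ico 1 R, ((if (A r).Nonempty then (1:ℝ) else 0)
          + 4*(Mn:ℝ) * (1/Real.sqrt 10)^r) := Finset.sum_le_sum hSr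
  rw [Finset.sum_add_distrib] at hsum1
  -- the indicator sum: card of nonempty levels
  set V : Finset ℕ := (Finset.Ico 1 R).filter (fun r => (A r).Nonempty) with hV
  have hbool : ∑ r ∈ Finset.Ico 1 R, (if (A r).Nonempty then (1:ℝ) else 0) = (V.card : ℝ) := by
    rw [hV, ← Finset.sum_filter]
    simp
  -- count nonempty levels
  have hVcard : V.card ≤ j + 1 := by
    rcases V.eq_empty_or_nonempty with hVe | hVne
    · rw [hVe]; simp
    set r₁ := V.min' hVne with hr₁def
    have hr₁mem : r₁ ∈ V := V.min'_mem hVne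
    have hr₁facts : 1 ≤ r₁ ∧ (A r₁).Nonempty := by
      rw [hV] at hr₁mem
      simp only [Finset.mem_filter, Finset.mem_Ico] at hr₁mem
      exact ⟨hr₁mem.1.1, hr₁mem.2⟩
    have hsub : V ⊆ Finset.Icc r₁ (r₁ + j) := by
      intro r hrV
      have hrmem := hrV
      rw [hV] at hrmem
      simp only [Finset.mem_filter, Finset.mem_Ico] at hrmem
      obtain ⟨p, hp⟩ := hrmem.2
      obtain ⟨p₀, hp₀⟩ := hr₁facts.2
      have hle : r₁ ≤ r := Finset.min'_le _ _ hrV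
      simp only [Finset.mem_Icc]
      refine ⟨hle, ?_⟩
      -- show r ≤ r₁ + j
      have hQmono' := hQmono r₁ r hle
      have hf := hAfacts r p hp
      have hf₀ := hAfacts r₁ p₀ hp₀
      obtain ⟨⟨⟨hp11, hp12⟩, ⟨hp21, hp22⟩⟩, hpc⟩ := hf
      obtain ⟨⟨⟨h011, h012⟩, ⟨h021, h022⟩⟩, h0c⟩ := hf₀
      have habs := abs_lt.mp hpc
      have habs0 := abs_lt.mp h0c
      have hNcast : (N:ℝ) = (4:ℝ)^j := by
        rw [hN]; push_cast
        rw [show (2:ℝ)^(2*j) = ((2:ℝ)^2)^j from by rw [← pow_mul], show ((2:ℝ)^2) = 4 from by norm_num]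
      have h4le : (4:ℝ)^j ≤ (10:ℝ)^j := by
        apply pow_le_pow_left₀ (by norm_num) (by norm_num)
      have h10jpos : (0:ℝ) < (10:ℝ)^j := by positivity
      -- casts
      have hp1le : (p.1:ℝ) ≤ (N:ℝ) := by exact_mod_cast hp12
      have hp2ge : (1:ℝ) ≤ (p.2:ℝ) := by exact_mod_cast hp21
      have h01ge : (1:ℝ) ≤ (p₀.1:ℝ) := by exact_mod_cast h011
      have h02ge : (1:ℝ) ≤ (p₀.2:ℝ) := by exact_mod_cast h021
      have h02le : (p₀.2:ℝ) ≤ (N:ℝ) := by exact_mod_cast h022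
      have hQr1pos : (0:ℝ) < Q r₁ := hQpos r₁
      have hQrpos : (0:ℝ) < Q r := hQpos r
      -- upper bound on Q r
      have hQrup : Q r ≤ (N:ℝ) + B + 1/4 := by
        have h1 : (p.2:ℝ) * Q r < (p.1:ℝ) + B + 1/4 := by linarith
        have h2 : Q r ≤ (p.2:ℝ) * Q r := le_mul_of_one_le_left (le_of_lt hQrpos) hp2ge
        linarith
      -- lower bounds on Q r₁
      have hQr1ge10 : (10:ℝ) ≤ Q r₁ := by
        have := hQge r₁
        calc (10:ℝ) = 10^1 := by norm_num
          _ ≤ 10^r₁ := pow_le_pow_right₀ (by norm_num) hr₁facts.1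
          _ ≤ Q r₁ := this
      have hQr1B : B + 3/4 < (p₀.2:ℝ) * Q r₁ := by linarith
      -- key: Q r < 10^(j+1) * Q r₁
      have hpow_succ : (10:ℝ)^(j+1) = 10 * 10^j := by rw [pow_succ]; ring
      have h10j1 : (0:ℝ) ≤ (10:ℝ)^(j+1) := by positivity
      have hkey : Q r < (10:ℝ)^(j+1) * Q r₁ := by
        rcases le_or_gt B ((N:ℝ)) with hB | hB
        · have hNle : (N:ℝ) ≤ (10:ℝ)^j := by rw [hNcast]; exact h4le
          have hh1 : Q r ≤ 2*(10:ℝ)^j + 1/4 := by linarith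
          have hh2 : (10:ℝ)^(j+1) * 10 ≤ (10:ℝ)^(j+1) * Q r₁ :=
            mul_le_mul_of_nonneg_left hQr1ge10 h10j1
          have hh3 : 2*(10:ℝ)^j + 1/4 < (10:ℝ)^(j+1) * 10 := by
            rw [hpow_succ]
            nlinarith
          linarith
        · -- B > N
          have hNpos : (0:ℝ) < (N:ℝ) := by rw [hNcast]; positivity
          have h02pos : (0:ℝ) < (p₀.2:ℝ) := by linarith
          have hstep : Q r * (p₀.2:ℝ) < 2*(N:ℝ) * Q r₁ * (p₀.2:ℝ) := by
            have e1 : Q r * (p₀.2:ℝ) ≤ ((N:ℝ) + B + 1/4) * (p₀.2:ℝ) := by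
              apply mul_le_mul_of_nonneg_right hQrup (by linarith)
            have e2 : ((N:ℝ) + B + 1/4) * (p₀.2:ℝ) ≤ ((N:ℝ) + B + 1/4) * (N:ℝ) := by
              apply mul_le_mul_of_nonneg_left h02le (by linarith)
            have e3 : ((N:ℝ) + B + 1/4) * (N:ℝ) < (2*B + 3/2) * (N:ℝ) := by
              nlinarith
            have e4 : (2*B + 3/2) * (N:ℝ) = 2*(N:ℝ) * (B + 3/4) := by ring
            have e5 : 2*(N:ℝ) * (B + 3/4) < 2*(N:ℝ) * ((p₀.2:ℝ) * Q r₁) :=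
              mul_lt_mul_of_pos_left hQr1B (by linarith)
            have e6 : 2*(N:ℝ) * ((p₀.2:ℝ) * Q r₁) = 2*(N:ℝ) * Q r₁ * (p₀.2:ℝ) := by ring
            linarith
          have hcancel : Q r < 2*(N:ℝ) * Q r₁ :=
            lt_of_mul_lt_mul_right hstep (le_of_lt h02pos)
          have h2N : 2*(N:ℝ) ≤ (10:ℝ)^(j+1) := by
            rw [hNcast, hpow_succ]
            nlinarith
          have : 2*(N:ℝ) * Q r₁ ≤ (10:ℝ)^(j+1) * Q r₁ :=
            mul_le_mul_of_nonneg_right h2N (le_of_lt hQr1pos)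
          linarith
      -- conclude
      have hfinal : (10:ℝ)^(r - r₁) < (10:ℝ)^(j+1) := by
        have hmul : (10:ℝ)^(r-r₁) * Q r₁ < (10:ℝ)^(j+1) * Q r₁ := lt_of_le_of_lt hQmono' hkey
        exact lt_of_mul_lt_mul_right hmul (le_of_lt hQr1pos)
      have : r - r₁ < j + 1 := by
        by_contra hcon
        push_neg at hcon
        have : (10:ℝ)^(j+1) ≤ (10:ℝ)^(r-r₁) := pow_le_pow_right₀ (by norm_num) hcon
        linarith
      omega
    calc V.card ≤ (Finset.Icc r₁ (r₁ + j)).card := Finset.card_le_card hsub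
      _ = j + 1 := by rw [Nat.card_Icc]; omega
  -- geometric sum
  have hgeom : ∑ r ∈ Finset.Ico 1 R, ((1:ℝ)/Real.sqrt 10)^r ≤ 1/2 := by
    have hterm : ∀ r ∈ Finset.Ico 1 R, ((1:ℝ)/Real.sqrt 10)^r ≤ (1/3:ℝ)^r := by
      intro r _
      apply pow_le_pow_left₀ (by positivity)
      rw [div_le_div_iff₀ hs10 (by norm_num)]
      linarith
    calc ∑ r ∈ Finset.Ico 1 R, ((1:ℝ)/Real.sqrt 10)^r
        ≤ ∑ r ∈ Finset.Ico 1 R, ((1/3:ℝ))^r := Finset.sum_le_sum hterm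
      _ = ∑ i ∈ Finset.range (R - 1), ((1/3:ℝ))^(1+i) := by
          rw [Finset.sum_Ico_eq_sum_range]
      _ = (1/3) * ∑ i ∈ Finset.range (R - 1), ((1/3:ℝ))^i := by
          rw [Finset.mul_sum]
          apply Finset.sum_congr rfl
          intro i _
          rw [pow_add, pow_one]
      _ ≤ (1/3) * (3/2) := by
          apply mul_le_mul_of_nonneg_left _ (by norm_num)
          rw [geom_sum_eq (by norm_num : (1/3:ℝ) ≠ 1)]
          rw [div_le_iff_of_neg (by norm_num : (1/3:ℝ) - 1 < 0)]
          have : (0:ℝ) ≤ (1/3:ℝ)^(R-1) := by positivity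
          linarith
      _ = 1/2 := by norm_num
  -- assemble
  have hconst : ∑ r ∈ Finset.Ico 1 R, 4*(Mn:ℝ) * (1/Real.sqrt 10)^r
      = 4*(Mn:ℝ) * ∑ r ∈ Finset.Ico 1 R, (1/Real.sqrt 10)^r := by
    rw [Finset.mul_sum]
  have hj2 : (j:ℝ) + 1 ≤ (2:ℝ)^j := by
    have : j + 1 ≤ 2^j := Nat.lt_two_pow_self (n := j)
    exact_mod_cast this
  have h2j : ((Mn:ℕ):ℝ) = 2*(2:ℝ)^j := by rw [hMncast]; ring
  have hVR : (V.card : ℝ) ≤ (j:ℝ) + 1 := by exact_mod_cast hVcard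
  calc ∑ p ∈ A 0, min 1 ((Mn:ℝ)/p.1) * min 1 ((Mn:ℝ)/p.2)
        + ∑ r ∈ Finset.Ico 1 R, ∑ p ∈ A r, min 1 ((Mn:ℝ)/p.1) * min 1 ((Mn:ℝ)/p.2)
      ≤ 2*(Mn:ℝ) + ((V.card:ℝ) + 4*(Mn:ℝ) * (1/2)) := by
        rw [← hbool]
        have := hsum1
        rw [hconst] at this
        have h4 : 4*(Mn:ℝ) * ∑ r ∈ Finset.Ico 1 R, ((1:ℝ)/Real.sqrt 10)^r ≤ 4*(Mn:ℝ)*(1/2) := by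
          apply mul_le_mul_of_nonneg_left hgeom (by positivity)
        linarith
    _ ≤ 10 * 2^j := by
        rw [h2j]
        linarith
end

section
/- Let (X_N)_{N∈ℕ} be i.i.d. random variables uniform on [0,1), L ≥ 1013, and define N_n := ⌊L·2^0⌋ + ⋯ + ⌊L·2^n⌋. For positive integers n, R with R = n, define A_n as the event that there exist k_n, k_{n+1}, …, k_{2n} with I_{n+j+1,k_{n+j+1}} ⊂ I_{n+j,k_{n+j}} (nested dyadic intervals) such that no point X_N with N_{n+j−1} < N ≤ N_{n+j} lies in I_{n+j,k_{n+j}}, for all 0 ≤ j ≤ n. Then ℙ(A_n) ≤ 2^{2n+1} · e^{−1012(n+1)}. -/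
open MeasureTheory ProbabilityTheory Finset

lemma chain_eq_div {k : ℕ → ℕ} {n : ℕ}
    (h : ∀ j, j < n → k (j + 1) = 2 * k j ∨ k (j + 1) = 2 * k j + 1) :
    ∀ j, j ≤ n → k j = k n / 2 ^ (n - j) := by
  have hstep : ∀ j, j < n → k j = k (j + 1) / 2 := by
    intro j hj; rcases h j hj with h' | h' <;> omega
  have aux : ∀ d, d ≤ n → k (n - d) = k n / 2 ^ d := by
    intro d
    induction d with
    | zero => simp
    | succ d ih =>
      intro hd
      have h1 : n - (d + 1) < n := by omega
      have h2 : n - (d + 1) + 1 = n - d := by omega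
      have h3 := hstep (n - (d + 1)) h1
      rw [h2] at h3
      rw [h3, ih (by omega), Nat.div_div_eq_div_mul, pow_succ]
  intro j hj
  have := aux (n - j) (by omega)
  rwa [Nat.sub_sub_self hj] at this

lemma single_prob {Ω : Type*} [MeasurableSpace Ω] (P : Measure Ω) [IsProbabilityMeasure P]
    (Y : Ω → ℝ) (hm : Measurable Y) (hY : Measure.map Y P = volume.restrict (Set.Ico (0:ℝ) 1))
    (m c : ℕ) (hc : c < 2 ^ m) :
    P (Y ⁻¹' (Set.Ico ((c:ℝ)/2^m) (((c:ℝ)+1)/2^m))ᶜ)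
      ≤ ENNReal.ofReal (Real.exp (-((2:ℝ)^m)⁻¹)) := by
  have ht0 : (0:ℝ) < 2 ^ m := by positivity
  have hIco : P (Y ⁻¹' Set.Ico ((c:ℝ)/2^m) (((c:ℝ)+1)/2^m)) = ENNReal.ofReal ((2:ℝ)^m)⁻¹ := by
    rw [← Measure.map_apply hm measurableSet_Ico, hY, Measure.restrict_apply measurableSet_Ico]
    have hsub : Set.Ico ((c:ℝ)/2^m) (((c:ℝ)+1)/2^m) ⊆ Set.Ico (0:ℝ) 1 := by
      apply Set.Ico_subset_Ico
      · positivity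
      · rw [div_le_one ht0]
        have : ((c+1 : ℕ) : ℝ) ≤ ((2^m : ℕ) : ℝ) := by exact_mod_cast Nat.cast_le.2 hc
        push_cast at this; linarith
    rw [Set.inter_eq_left.2 hsub, Real.volume_Ico]
    congr 1
    field_simp
    ring
  rw [Set.preimage_compl, prob_compl_eq_one_sub (hm measurableSet_Ico), hIco]
  have hx1 : ((2:ℝ)^m)⁻¹ ≤ 1 := by
    rw [inv_le_one_iff₀]; right; exact one_le_pow₀ one_le_two
  rw [← ENNReal.ofReal_one, ← ENNReal.ofReal_sub _ (by positivity)]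
  apply ENNReal.ofReal_le_ofReal
  have := Real.add_one_le_exp (-((2:ℝ)^m)⁻¹)
  linarith

/-- For i.i.d. uniform points on [0,1), `L ≥ 1013`,
`N_m = ⌊L·2^0⌋ + ⋯ + ⌊L·2^m⌋` (here `NN m = N_{m-1}`), and `A_n` the event that some
nested chain of dyadic intervals from level `n` to level `2n` avoids all points of the
corresponding levels, one has `ℙ(A_n) ≤ 2^{2n+1} e^{−1012(n+1)}`. -/
theorem stmt_6 {Ω : Type*} [MeasurableSpace Ω] (P : Measure Ω) [IsProbabilityMeasure P]
    (X : ℕ → Ω → ℝ) (hmeas : ∀ N, Measurable (X N))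
    (hindep : iIndepFun X P)
    (hunif : ∀ N, Measure.map (X N) P = volume.restrict (Set.Ico (0 : ℝ) 1))
    (L : ℝ) (hL : 1013 ≤ L)
    (NN : ℕ → ℕ) (hNN : ∀ m, NN m = ∑ i ∈ Finset.range m, ⌊L * 2 ^ i⌋₊)
    (n : ℕ) (hn : 1 ≤ n) :
    P {ω : Ω | ∃ k : ℕ → ℕ,
        (∀ j, j ≤ n → k j < 2 ^ (n + j)) ∧
        (∀ j, j < n → k (j + 1) = 2 * k j ∨ k (j + 1) = 2 * k j + 1) ∧
        (∀ j, j ≤ n → ∀ N : ℕ, NN (n + j) < N → N ≤ NN (n + j + 1) →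
          ¬ ((k j : ℝ) / 2 ^ (n + j) ≤ X N ω ∧ X N ω < ((k j : ℝ) + 1) / 2 ^ (n + j)))}
      ≤ ENNReal.ofReal (2 ^ (2 * n + 1) * Real.exp (-(1012 : ℝ) * (n + 1))) := by
  -- basic facts about NN
  have hNNsucc : ∀ m, NN (m + 1) = NN m + ⌊L * 2 ^ m⌋₊ := by
    intro m; rw [hNN, hNN, Finset.sum_range_succ]
  have hNNmono : Monotone NN := by
    intro a b hab
    rw [hNN, hNN]
    exact Finset.sum_le_sum_of_subset (Finset.range_subset_range.2 hab)
  -- the level of an index N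
  set lev : ℕ → ℕ := fun N => Nat.findGreatest (fun j => NN (n + j) < N) n with hlevdef
  have hlev_le : ∀ N, lev N ≤ n := fun N => Nat.findGreatest_le n
  have hlev : ∀ j, j ≤ n → ∀ N, NN (n + j) < N → N ≤ NN (n + j + 1) → lev N = j := by
    intro j hj N h1 h2
    rw [hlevdef]
    rw [Nat.findGreatest_eq_iff]
    refine ⟨hj, fun _ => h1, ?_⟩
    intro j' hlt hle hP
    have : NN (n + j + 1) ≤ NN (n + j') := hNNmono (by omega)
    omega
  -- the index set
  set T : Finset ℕ :=
    (Finset.range (n + 1)).biUnion (fun j => Finset.Ioc (NN (n + j)) (NN (n + j + 1))) with hTdef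
  have hpair : (↑(Finset.range (n + 1)) : Set ℕ).PairwiseDisjoint
      (fun j => Finset.Ioc (NN (n + j)) (NN (n + j + 1))) := by
    intro a _ b _ hab
    simp only [Function.onFun]
    rw [Finset.disjoint_left]
    intro N hNa hNb
    rw [Finset.mem_Ioc] at hNa hNb
    rcases Nat.lt_or_ge a b with h | h
    · have : NN (n + a + 1) ≤ NN (n + b) := hNNmono (by omega)
      omega
    · have hba : b < a := by omega
      have : NN (n + b + 1) ≤ NN (n + a) := hNNmono (by omega)
      omega
  -- the per-chain events
  set E : ℕ → Set Ω := fun K => ⋂ N ∈ T, X N ⁻¹'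
      (Set.Ico (((K / 2 ^ (n - lev N) : ℕ) : ℝ) / 2 ^ (n + lev N))
        ((((K / 2 ^ (n - lev N) : ℕ) : ℝ) + 1) / 2 ^ (n + lev N)))ᶜ with hEdef
  -- inclusion into the union
  have hsub : {ω : Ω | ∃ k : ℕ → ℕ,
        (∀ j, j ≤ n → k j < 2 ^ (n + j)) ∧
        (∀ j, j < n → k (j + 1) = 2 * k j ∨ k (j + 1) = 2 * k j + 1) ∧
        (∀ j, j ≤ n → ∀ N : ℕ, NN (n + j) < N → N ≤ NN (n + j + 1) →
          ¬ ((k j : ℝ) / 2 ^ (n + j) ≤ X N ω ∧ X N ω < ((k j : ℝ) + 1) / 2 ^ (n + j)))}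
      ⊆ ⋃ K ∈ Finset.range (2 ^ (2 * n)), E K := by
    rintro ω ⟨k, hk1, hk2, hk3⟩
    have hKlt : k n < 2 ^ (2 * n) := by
      have := hk1 n le_rfl
      have h2n : n + n = 2 * n := by ring
      rwa [h2n] at this
    refine Set.mem_iUnion₂.2 ⟨k n, Finset.mem_range.2 hKlt, ?_⟩
    rw [hEdef]
    refine Set.mem_iInter₂.2 ?_
    intro N hN
    rw [hTdef, Finset.mem_biUnion] at hN
    obtain ⟨j, hjmem, hNIoc⟩ := hN
    rw [Finset.mem_range] at hjmem
    rw [Finset.mem_Ioc] at hNIoc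
    have hjn : j ≤ n := by omega
    have hlevN : lev N = j := hlev j hjn N hNIoc.1 hNIoc.2
    have hkj : k j = k n / 2 ^ (n - j) := chain_eq_div hk2 j hjn
    have h3 := hk3 j hjn N hNIoc.1 hNIoc.2
    simp only [Set.mem_preimage, Set.mem_compl_iff, Set.mem_Ico, hlevN, ← hkj]
    exact h3
  calc P _ ≤ P (⋃ K ∈ Finset.range (2 ^ (2 * n)), E K) := measure_mono hsub
    _ ≤ ∑ K ∈ Finset.range (2 ^ (2 * n)), P (E K) := measure_biUnion_finset_le _ _
    _ ≤ ∑ K ∈ Finset.range (2 ^ (2 * n)),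
          ENNReal.ofReal (Real.exp (-(1012 * (n + 1)) : ℝ)) := by
      apply Finset.sum_le_sum
      intro K hK
      rw [Finset.mem_range] at hK
      -- independence
      have hEmeas : P (E K) = ∏ N ∈ T, P (X N ⁻¹'
          (Set.Ico (((K / 2 ^ (n - lev N) : ℕ) : ℝ) / 2 ^ (n + lev N))
            ((((K / 2 ^ (n - lev N) : ℕ) : ℝ) + 1) / 2 ^ (n + lev N)))ᶜ) := by
        rw [hEdef]
        exact hindep.meas_biInter (fun N _ => ⟨_, measurableSet_Ico.compl, rfl⟩)
      rw [hEmeas]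
      have hcbound : ∀ N, K / 2 ^ (n - lev N) < 2 ^ (n + lev N) := by
        intro N
        have hle : lev N ≤ n := hlev_le N
        rw [Nat.div_lt_iff_lt_mul (by positivity)]
        calc K < 2 ^ (2 * n) := hK
          _ = 2 ^ (n + lev N) * 2 ^ (n - lev N) := by
            rw [← pow_add]; congr 1; omega
      calc ∏ N ∈ T, P (X N ⁻¹'
          (Set.Ico (((K / 2 ^ (n - lev N) : ℕ) : ℝ) / 2 ^ (n + lev N))
            ((((K / 2 ^ (n - lev N) : ℕ) : ℝ) + 1) / 2 ^ (n + lev N)))ᶜ)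
          ≤ ∏ N ∈ T, ENNReal.ofReal (Real.exp (-((2:ℝ) ^ (n + lev N))⁻¹)) := by
            apply Finset.prod_le_prod'
            intro N _
            exact single_prob P (X N) (hmeas N) (hunif N) (n + lev N) _ (hcbound N)
        _ = ENNReal.ofReal (∏ N ∈ T, Real.exp (-((2:ℝ) ^ (n + lev N))⁻¹)) := by
            rw [ENNReal.ofReal_prod_of_nonneg (fun _ _ => (Real.exp_pos _).le)]
        _ ≤ ENNReal.ofReal (Real.exp (-(1012 * (n + 1)) : ℝ)) := by
            apply ENNReal.ofReal_le_ofReal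
            rw [← Real.exp_sum]
            apply Real.exp_le_exp.2
            rw [Finset.sum_neg_distrib, neg_le_neg_iff]
            -- sum over T of (2^(n+lev N))⁻¹ ≥ 1012 (n+1)
            have hsum : ∑ N ∈ T, ((2:ℝ) ^ (n + lev N))⁻¹
                = ∑ j ∈ Finset.range (n + 1),
                    (⌊L * 2 ^ (n + j)⌋₊ : ℝ) * ((2:ℝ) ^ (n + j))⁻¹ := by
              rw [hTdef, Finset.sum_biUnion hpair]
              apply Finset.sum_congr rfl
              intro j hj
              rw [Finset.mem_range] at hj
              have hjn : j ≤ n := by omega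
              have hcongr : ∀ N ∈ Finset.Ioc (NN (n + j)) (NN (n + j + 1)),
                  ((2:ℝ) ^ (n + lev N))⁻¹ = ((2:ℝ) ^ (n + j))⁻¹ := by
                intro N hN
                rw [Finset.mem_Ioc] at hN
                rw [hlev j hjn N hN.1 hN.2]
              rw [Finset.sum_congr rfl hcongr, Finset.sum_const, Nat.card_Ioc, hNNsucc,
                nsmul_eq_mul]
              have hsub' : NN (n + j) + ⌊L * 2 ^ (n + j)⌋₊ - NN (n + j)
                  = ⌊L * 2 ^ (n + j)⌋₊ := by omega
              rw [hsub']
            rw [hsum]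
            have hterm : ∀ j ∈ Finset.range (n + 1),
                (1012:ℝ) ≤ (⌊L * 2 ^ (n + j)⌋₊ : ℝ) * ((2:ℝ) ^ (n + j))⁻¹ := by
              intro j _
              have ht0 : (0:ℝ) < 2 ^ (n + j) := by positivity
              have ht1 : (1:ℝ) ≤ 2 ^ (n + j) := one_le_pow₀ one_le_two
              have hf : L * 2 ^ (n + j) - 1 ≤ (⌊L * 2 ^ (n + j)⌋₊ : ℝ) :=
                (Nat.sub_one_lt_floor _).le
              have key : (1012:ℝ) * 2 ^ (n + j) ≤ (⌊L * 2 ^ (n + j)⌋₊ : ℝ) := by nlinarith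
              calc (1012:ℝ) = 1012 * 2 ^ (n + j) * ((2:ℝ) ^ (n + j))⁻¹ := by field_simp
                _ ≤ (⌊L * 2 ^ (n + j)⌋₊ : ℝ) * ((2:ℝ) ^ (n + j))⁻¹ :=
                  mul_le_mul_of_nonneg_right key (by positivity)
            calc (1012:ℝ) * (n + 1) = ∑ _j ∈ Finset.range (n + 1), (1012:ℝ) := by
                  rw [Finset.sum_const, Finset.card_range, nsmul_eq_mul]; push_cast; ring
              _ ≤ _ := Finset.sum_le_sum hterm
    _ = (2 ^ (2 * n) : ℕ) * ENNReal.ofReal (Real.exp (-(1012 * (n + 1)) : ℝ)) := by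
        rw [Finset.sum_const, Finset.card_range, nsmul_eq_mul]
    _ ≤ ENNReal.ofReal (2 ^ (2 * n + 1) * Real.exp (-(1012 : ℝ) * (n + 1))) := by
        rw [← ENNReal.ofReal_natCast, ← ENNReal.ofReal_mul (by positivity)]
        apply ENNReal.ofReal_le_ofReal
        push_cast
        have h1 : (-(1012 * ((n:ℝ) + 1))) = (-(1012:ℝ) * ((n:ℝ) + 1)) := by ring
        rw [h1]
        apply mul_le_mul_of_nonneg_right _ (Real.exp_pos _).le
        apply pow_le_pow_right₀ one_le_two
        omega
end

section
/- Let (X_N) be i.i.d. uniform on [0,1) and ℓ_N = 2026/N for N ≥ 2026 (and ℓ_N = 1 otherwise). Then almost surely every δ ∈ [0,1) satisfies ‖δ − X_N‖ < ℓ_N/2 for infinitely many N. -/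
open MeasureTheory ProbabilityTheory

/-- Distance from a real number to the nearest integer (circle distance). -/
noncomputable def nid (x : ℝ) : ℝ := |x - round x|

lemma nid_eq_norm (x : ℝ) : nid x = ‖(x : UnitAddCircle)‖ := (UnitAddCircle.norm_eq).symm

lemma nid_nonneg (x : ℝ) : 0 ≤ nid x := abs_nonneg _

lemma nid_tri (a b c : ℝ) : nid (a - c) ≤ nid (a - b) + nid (b - c) := by
  simp only [nid_eq_norm]
  rw [show a - c = (a - b) + (b - c) by ring, AddCircle.coe_add]
  exact norm_add_le _ _

lemma nid_le_abs (x : ℝ) : nid x ≤ |x| := by simpa [nid] using round_le x 0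

lemma miss_set_eq (c r : ℝ) : {x : ℝ | ¬ nid (c - x) ≤ r} =
    ((↑) : ℝ → UnitAddCircle) ⁻¹' (Metric.closedBall ((c:ℝ) : UnitAddCircle) r)ᶜ := by
  ext x
  simp only [Set.mem_setOf_eq, Set.mem_preimage, Set.mem_compl_iff, Metric.mem_closedBall]
  rw [dist_eq_norm, nid_eq_norm,
    show (x : UnitAddCircle) - (c : UnitAddCircle) = ((x - c : ℝ) : UnitAddCircle) by
      rw [show x - c = x + (-c) by ring, AddCircle.coe_add]; simp [sub_eq_add_neg],
    show ((c - x : ℝ) : UnitAddCircle) = -((x - c : ℝ) : UnitAddCircle) by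
      rw [show c - x = -(x-c) by ring]; simp,
    norm_neg]

lemma measurable_circle_mk : Measurable ((↑) : ℝ → UnitAddCircle) :=
  QuotientAddGroup.measurable_coe

lemma miss_set_measurable (c r : ℝ) : MeasurableSet {x : ℝ | ¬ nid (c - x) ≤ r} := by
  rw [miss_set_eq]
  exact measurable_circle_mk Metric.isClosed_closedBall.measurableSet.compl

lemma miss_measure (c : ℝ) (r : ℝ) :
    volume.restrict (Set.Ico (0:ℝ) 1) {x : ℝ | ¬ nid (c - x) ≤ r} =
      1 - ENNReal.ofReal (min 1 (2*r)) := by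
  have hmp := (UnitAddCircle.measurePreserving_mk 0).measure_preimage
      (s := (Metric.closedBall ((c:ℝ) : UnitAddCircle) r)ᶜ)
      (Metric.isClosed_closedBall.measurableSet.compl).nullMeasurableSet
  rw [miss_set_eq, Measure.restrict_congr_set
      (show Set.Ico (0:ℝ) 1 =ᵐ[volume] Set.Ioc 0 (0+1) by rw [zero_add]; exact Ico_ae_eq_Ioc),
    hmp, measure_compl Metric.isClosed_closedBall.measurableSet (measure_ne_top _ _),
    AddCircle.volume_closedBall, UnitAddCircle.measure_univ, min_comm]

lemma block_prob {Ω : Type*} [MeasurableSpace Ω] (P : Measure Ω) [IsProbabilityMeasure P]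
    (X : ℕ → Ω → ℝ) (hmeas : ∀ N, Measurable (X N))
    (hindep : iIndepFun (m := fun _ : ℕ => (inferInstance : MeasurableSpace ℝ)) X P)
    (hunif : ∀ N, Measure.map (X N) P = volume.restrict (Set.Ico (0 : ℝ) 1))
    (c : ℝ) (r : ℕ → ℝ) (B : Finset ℕ) :
    P (⋂ N ∈ B, {ω | ¬ nid (c - X N ω) ≤ r N}) =
      ∏ N ∈ B, (1 - ENNReal.ofReal (min 1 (2 * r N))) := by
  have key : ∀ N ∈ B, MeasurableSet[(inferInstance : MeasurableSpace ℝ).comap (X N)]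
      {ω | ¬ nid (c - X N ω) ≤ r N} :=
    fun N _ => ⟨{x | ¬ nid (c - x) ≤ r N}, miss_set_measurable c (r N), rfl⟩
  rw [hindep.meas_biInter key]
  refine Finset.prod_congr rfl fun N _ => ?_
  have : {ω | ¬ nid (c - X N ω) ≤ r N} = X N ⁻¹' {x | ¬ nid (c - x) ≤ r N} := rfl
  rw [this, ← Measure.map_apply (hmeas N) (miss_set_measurable c (r N)), hunif N, miss_measure]

lemma harmonic_lb (a : ℕ) (ha : 1 ≤ a) (b : ℕ) (hab : a ≤ b) :
    Real.log b - Real.log a ≤ ∑ N ∈ Finset.Ico a b, ((N:ℝ))⁻¹ := by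
  induction b, hab using Nat.le_induction with
  | base => simp
  | succ b hb ih =>
    rw [Finset.sum_Ico_succ_top hb]
    have hb0 : (0:ℝ) < b := by
      have : (1:ℕ) ≤ b := le_trans ha hb
      exact_mod_cast Nat.lt_of_lt_of_le Nat.zero_lt_one this
    have hlog : Real.log ((b:ℝ)+1) - Real.log b ≤ (b:ℝ)⁻¹ := by
      rw [← Real.log_div (by positivity) (ne_of_gt hb0)]
      have h1 : ((b:ℝ)+1)/b = 1 + (b:ℝ)⁻¹ := by field_simp
      calc Real.log (((b:ℝ)+1)/b) ≤ ((b:ℝ)+1)/b - 1 :=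
            Real.log_le_sub_one_of_pos (by positivity)
        _ = (b:ℝ)⁻¹ := by rw [h1]; ring
    push_cast
    linarith

lemma prod_bound (ℓ : ℕ → ℝ) (hℓ : ∀ N, ℓ N = if 2026 ≤ N then 2026 / (N : ℝ) else 1)
    (k : ℕ) (hk : 6 ≤ k) :
    ∏ N ∈ Finset.Ico (4^k) (16^k), (1 - min 1 (2 * (ℓ N / 8))) ≤ Real.exp (-(506 * k)) := by
  set B := Finset.Ico (4^k : ℕ) (16^k) with hB
  have hNlarge : ∀ N ∈ B, 2026 ≤ N := by
    intro N hN
    rw [hB, Finset.mem_Ico] at hN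
    calc 2026 ≤ 4^6 := by norm_num
      _ ≤ 4^k := Nat.pow_le_pow_right (by norm_num) hk
      _ ≤ N := hN.1
  have hNpos : ∀ N ∈ B, (0:ℝ) < N := by
    intro N hN
    have := hNlarge N hN
    have : (2026:ℝ) ≤ (N:ℝ) := by exact_mod_cast this
    linarith
  have hp : ∀ N ∈ B, min 1 (2 * (ℓ N / 8)) = 2026 / (4 * (N:ℝ)) := by
    intro N hN
    have hN0 := hNpos N hN
    have h2026 : (2026:ℝ) ≤ (N:ℝ) := by exact_mod_cast hNlarge N hN
    rw [hℓ N, if_pos (hNlarge N hN),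
      show 2 * (2026 / (N:ℝ) / 8) = 2026 / (4 * (N:ℝ)) by field_simp; ring]
    rw [min_eq_right]
    rw [div_le_one (by positivity)]
    linarith
  have h1 : ∏ N ∈ B, (1 - min 1 (2 * (ℓ N / 8))) ≤
      ∏ N ∈ B, Real.exp (-(2026 / (4 * (N:ℝ)))) := by
    apply Finset.prod_le_prod
    · intro N _
      have : min 1 (2 * (ℓ N / 8)) ≤ 1 := min_le_left _ _
      linarith
    · intro N hN
      rw [hp N hN]
      have := Real.add_one_le_exp (-(2026 / (4 * (N:ℝ))))
      linarith
  rw [← Real.exp_sum] at h1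
  refine le_trans h1 (Real.exp_le_exp.mpr ?_)
  have hsum : (506:ℝ) * k ≤ ∑ N ∈ B, 2026 / (4 * (N:ℝ)) := by
    have hh := harmonic_lb (4^k) (Nat.one_le_two_pow.trans (Nat.pow_le_pow_left (by norm_num) k))
      (16^k) (Nat.pow_le_pow_left (by norm_num) k)
    have hcast : Real.log ((16^k : ℕ):ℝ) - Real.log ((4^k : ℕ):ℝ) = k * Real.log 4 := by
      push_cast
      rw [Real.log_pow, Real.log_pow, show (16:ℝ) = 4^2 by norm_num, Real.log_pow]
      push_cast
      ring
    rw [hcast] at hh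
    have hlog4 : 1 ≤ Real.log 4 := by
      rw [Real.le_log_iff_exp_le (by norm_num)]
      calc Real.exp 1 ≤ 2.7182818286 := (Real.exp_one_lt_d9).le
        _ ≤ 4 := by norm_num
    have hks : (k:ℝ) ≤ ∑ N ∈ B, ((N:ℝ))⁻¹ := by nlinarith [Nat.cast_nonneg (α := ℝ) k]
    have hsum0 : (0:ℝ) ≤ (k:ℝ) := Nat.cast_nonneg k
    calc (506:ℝ) * k ≤ (2026/4) * ∑ N ∈ B, ((N:ℝ))⁻¹ := by nlinarith
      _ = ∑ N ∈ B, 2026 / (4 * (N:ℝ)) := by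
        rw [Finset.mul_sum]
        refine Finset.sum_congr rfl fun N hN => ?_
        have := hNpos N hN
        field_simp
  have : ∑ N ∈ B, -(2026 / (4 * (N:ℝ))) = -∑ N ∈ B, 2026 / (4 * (N:ℝ)) := by
    rw [Finset.sum_neg_distrib]
  rw [this]
  linarith

lemma deterministic (Y : ℕ → ℝ) (ℓ : ℕ → ℝ)
    (hℓ : ∀ N, ℓ N = if 2026 ≤ N then 2026 / (N : ℝ) else 1)
    (h : ∀ᶠ m in Filter.atTop, ∀ j ∈ Finset.range (16^(m+6)),
      ∃ N ∈ Finset.Ico (4^(m+6)) (16^(m+6)), nid ((j:ℝ)/16^(m+6) - Y N) ≤ ℓ N / 8) :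
    ∀ δ ∈ Set.Ico (0:ℝ) 1, {N : ℕ | nid (δ - Y N) < ℓ N / 2}.Infinite := by
  intro δ hδ
  by_contra hfin
  rw [Set.not_infinite] at hfin
  obtain ⟨K, hK⟩ := hfin.bddAbove
  obtain ⟨M, hM⟩ := Filter.eventually_atTop.mp h
  set m := max M K with hm
  set k := m + 6 with hk
  have hgood := hM m (le_max_left _ _)
  have h16 : (0:ℝ) < (16:ℝ)^k := by positivity
  set j := ⌊δ * (16:ℝ)^k⌋₊ with hj
  have hcastpow : ((16^k : ℕ):ℝ) = (16:ℝ)^k := by push_cast; ring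
  have hjlt : j < 16^k := by
    have hlt : δ * (16:ℝ)^k < ((16^k : ℕ):ℝ) := by
      rw [hcastpow]; nlinarith [hδ.2, h16, hδ.1]
    exact (Nat.floor_lt (mul_nonneg hδ.1 (le_of_lt h16))).mpr hlt
  obtain ⟨N, hNmem, hNhit⟩ := hgood j (Finset.mem_range.mpr hjlt)
  rw [Finset.mem_Ico] at hNmem
  have hN2026 : 2026 ≤ N := by
    calc 2026 ≤ 4^6 := by norm_num
      _ ≤ 4^k := Nat.pow_le_pow_right (by norm_num) (by omega)
      _ ≤ N := hNmem.1
  have hNr : (0:ℝ) < N := by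
    have : (2026:ℝ) ≤ (N:ℝ) := by exact_mod_cast hN2026
    linarith
  have hℓN : ℓ N = 2026 / N := by rw [hℓ N, if_pos hN2026]
  have hcj : 0 ≤ δ - (j:ℝ)/(16:ℝ)^k := by
    have hfl := Nat.floor_le (mul_nonneg hδ.1 (le_of_lt h16))
    rw [sub_nonneg, div_le_iff₀ h16]
    exact hfl
  have hcj2 : δ - (j:ℝ)/(16:ℝ)^k < 1/(16:ℝ)^k := by
    have hfl := Nat.lt_floor_add_one (δ * (16:ℝ)^k)
    rw [sub_lt_iff_lt_add, ← add_div, lt_div_iff₀ h16]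
    linarith
  have htri := nid_tri δ ((j:ℝ)/(16:ℝ)^k) (Y N)
  have h1 : nid (δ - (j:ℝ)/(16:ℝ)^k) ≤ δ - (j:ℝ)/(16:ℝ)^k :=
    le_trans (nid_le_abs _) (le_of_eq (abs_of_nonneg hcj))
  have hNlt : (N:ℝ) < (16:ℝ)^k := by
    rw [← hcastpow]; exact_mod_cast hNmem.2
  have hfrac : 1/(16:ℝ)^k ≤ 3 * (2026/(N:ℝ)) / 8 := by
    have ha : 1/(16:ℝ)^k ≤ 1/(N:ℝ) := one_div_le_one_div_of_le hNr hNlt.le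
    have hb : (0:ℝ) ≤ 1/(N:ℝ) := by positivity
    have hc : 3 * (2026/(N:ℝ)) / 8 = 759.75 * (1/(N:ℝ)) := by ring
    rw [hc]
    nlinarith
  have hNin : N ∈ {N : ℕ | nid (δ - Y N) < ℓ N / 2} := by
    have hhit' : nid ((j:ℝ)/(16:ℝ)^k - Y N) ≤ 2026/(N:ℝ)/8 := by
      rw [hℓN] at hNhit; exact hNhit
    have : nid (δ - Y N) < 2026/(N:ℝ)/2 := by
      have h3 : 3 * (2026/(N:ℝ)) / 8 + 2026/(N:ℝ)/8 = 2026/(N:ℝ)/2 := by ring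
      linarith
    rw [Set.mem_setOf_eq, hℓN]
    exact this
  have hle := hK hNin
  have hgt : K < N := by
    have h1' : k < 4^k := Nat.lt_pow_self (by norm_num)
    have h2' : K ≤ m := le_max_right _ _
    have h4k : (4:ℕ)^k ≤ N := hNmem.1
    omega
  omega

/-- For i.i.d. uniform points `X_N` on `[0,1)` and lengths
`ℓ_N = 2026/N` for `N ≥ 2026` (and `ℓ_N = 1` otherwise), almost surely every
`δ ∈ [0,1)` satisfies `‖δ − X_N‖ < ℓ_N/2` for infinitely many `N`. -/
theorem stmt_7 {Ω : Type*} [MeasurableSpace Ω] (P : Measure Ω) [IsProbabilityMeasure P]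
    (X : ℕ → Ω → ℝ) (hmeas : ∀ N, Measurable (X N))
    (hindep : iIndepFun (m := fun _ : ℕ => (inferInstance : MeasurableSpace ℝ)) X P)
    (hunif : ∀ N, Measure.map (X N) P = volume.restrict (Set.Ico (0 : ℝ) 1))
    (ℓ : ℕ → ℝ) (hℓ : ∀ N, ℓ N = if 2026 ≤ N then 2026 / (N : ℝ) else 1) :
    P {ω : Ω | ∀ δ ∈ Set.Ico (0 : ℝ) 1,
        {N : ℕ | nid (δ - X N ω) < ℓ N / 2}.Infinite} = 1 := by
  classical
  set bad : ℕ → Set Ω := fun m =>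
    ⋃ j ∈ Finset.range (16^(m+6)), ⋂ N ∈ Finset.Ico (4^(m+6)) (16^(m+6)),
      {ω : Ω | ¬ nid ((j:ℝ)/(16:ℝ)^(m+6) - X N ω) ≤ ℓ N / 8} with hbad_def
  have hq0 : ∀ N, 0 ≤ min 1 (2 * (ℓ N / 8)) := by
    intro N
    rw [hℓ N]
    split <;> positivity
  -- probability bound on bad m
  have hbadP : ∀ m, P (bad m) ≤ ENNReal.ofReal ((2⁻¹:ℝ)^m) := by
    intro m
    set k := m + 6 with hk
    have hperj : ∀ j : ℕ,
        P (⋂ N ∈ Finset.Ico (4^k) (16^k),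
          {ω : Ω | ¬ nid ((j:ℝ)/(16:ℝ)^k - X N ω) ≤ ℓ N / 8}) ≤
        ENNReal.ofReal (Real.exp (-(506 * k))) := by
      intro j
      rw [block_prob P X hmeas hindep hunif ((j:ℝ)/(16:ℝ)^k) (fun N => ℓ N / 8) _]
      have heq : ∀ N ∈ Finset.Ico (4^k) (16^k),
          1 - ENNReal.ofReal (min 1 (2 * (ℓ N / 8))) =
            ENNReal.ofReal (1 - min 1 (2 * (ℓ N / 8))) := by
        intro N _
        rw [ENNReal.ofReal_sub _ (hq0 N), ENNReal.ofReal_one]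
      rw [Finset.prod_congr rfl heq, ← ENNReal.ofReal_prod_of_nonneg
        (fun N _ => by have := min_le_left 1 (2 * (ℓ N / 8)); linarith)]
      exact ENNReal.ofReal_le_ofReal (prod_bound ℓ hℓ k (by omega))
    calc P (bad m) ≤ ∑ j ∈ Finset.range (16^k),
          P (⋂ N ∈ Finset.Ico (4^k) (16^k),
            {ω : Ω | ¬ nid ((j:ℝ)/(16:ℝ)^k - X N ω) ≤ ℓ N / 8}) :=
        measure_biUnion_finset_le _ _
      _ ≤ ∑ _j ∈ Finset.range (16^k), ENNReal.ofReal (Real.exp (-(506 * k))) :=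
        Finset.sum_le_sum fun j _ => hperj j
      _ = (16^k : ℕ) * ENNReal.ofReal (Real.exp (-(506 * k))) := by
        rw [Finset.sum_const, Finset.card_range, nsmul_eq_mul]
      _ = ENNReal.ofReal (((16^k : ℕ):ℝ) * Real.exp (-(506 * k))) := by
        rw [ENNReal.ofReal_mul (by positivity), ENNReal.ofReal_natCast]
      _ ≤ ENNReal.ofReal ((2⁻¹:ℝ)^m) := by
        apply ENNReal.ofReal_le_ofReal
        have hexp : Real.exp (-(506 * (k:ℝ))) = (Real.exp (-506))^k := by
          rw [← Real.exp_nat_mul]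
          congr 1
          ring
        have hpow : ((16^k : ℕ):ℝ) = (16:ℝ)^k := by push_cast; ring
        rw [hpow, hexp, ← mul_pow]
        have hbase : (16:ℝ) * Real.exp (-506) ≤ 2⁻¹ := by
          have h507 : (507:ℝ) ≤ Real.exp 506 := by
            have := Real.add_one_le_exp (506:ℝ)
            linarith
          rw [Real.exp_neg]
          have hinv : (Real.exp 506)⁻¹ ≤ (507:ℝ)⁻¹ := by
            apply inv_anti₀ (by norm_num) h507
          calc (16:ℝ) * (Real.exp 506)⁻¹ ≤ 16 * (507:ℝ)⁻¹ := by nlinarith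
            _ ≤ 2⁻¹ := by norm_num
        calc ((16:ℝ) * Real.exp (-506))^k ≤ (2⁻¹:ℝ)^k :=
              pow_le_pow_left₀ (by positivity) hbase k
          _ ≤ (2⁻¹:ℝ)^m := pow_le_pow_of_le_one (by norm_num) (by norm_num) (by omega)
  have htsum : ∑' m, P (bad m) ≠ ⊤ := by
    have hle : ∑' m, P (bad m) ≤ ∑' m : ℕ, (ENNReal.ofReal (2⁻¹:ℝ))^m := by
      refine ENNReal.tsum_le_tsum fun m => ?_
      calc P (bad m) ≤ ENNReal.ofReal ((2⁻¹:ℝ)^m) := hbadP m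
        _ = (ENNReal.ofReal (2⁻¹:ℝ))^m := ENNReal.ofReal_pow (by norm_num) m
    rw [ENNReal.tsum_geometric] at hle
    refine ne_top_of_le_ne_top ?_ hle
    rw [ENNReal.inv_ne_top]
    intro hcon
    rw [tsub_eq_zero_iff_le] at hcon
    exact absurd hcon (not_le.mpr (ENNReal.ofReal_lt_one.mpr (by norm_num)))
  have hBC := MeasureTheory.ae_eventually_notMem htsum
  set target : Set Ω := {ω : Ω | ∀ δ ∈ Set.Ico (0 : ℝ) 1,
      {N : ℕ | nid (δ - X N ω) < ℓ N / 2}.Infinite} with htarget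
  have hae : ∀ᵐ ω ∂P, ω ∈ target := by
    refine hBC.mono fun ω hω => ?_
    apply deterministic (fun N => X N ω) ℓ hℓ
    refine hω.mono fun m hm j hj => ?_
    by_contra hcon
    push_neg at hcon
    apply hm
    refine Set.mem_biUnion hj ?_
    refine Set.mem_iInter₂.mpr fun N hN => ?_
    exact not_le.mpr (hcon N hN)
  have h0 : P targetᶜ = 0 := by
    have := ae_iff.mp hae
    exact this
  refine le_antisymm prob_le_one ?_
  calc (1:ENNReal) = P Set.univ := measure_univ.symm
    _ = P (target ∪ targetᶜ) := by rw [Set.union_compl_self]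
    _ ≤ P target + P targetᶜ := measure_union_le _ _
    _ = P target := by rw [h0, add_zero]
end

section
/- Suppose ψ : ℕ → ℝ≥0 is nonincreasing and satisfies limsup_{N→∞} ∑_{N < n ≤ 2^N} ψ(n) > C. Then the function φ(n) := min(ψ(n), C/n) is nonincreasing and also satisfies limsup_{N→∞} ∑_{N < n ≤ 2^N} φ(n) ≥ C·(1 − o(1)); in particular limsup_{N→∞} ∑_{N < n ≤ 2^N} φ(n) ≥ C/2 for the constant C. -/
open Filter Finset

/-- If `ψ : ℕ → ℝ` is nonincreasing, nonnegative and satisfies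
`limsup_{N} ∑_{N < n ≤ 2^N} ψ(n) > C`, then `φ(n) := min(ψ(n), C/n)` is nonincreasing
(on `n ≥ 1`) and satisfies `limsup_{N} ∑_{N < n ≤ 2^N} φ(n) ≥ C/2`. -/
theorem stmt_14 (ψ : ℕ → ℝ) (C : ℝ) (hC : 0 < C)
    (hnonneg : ∀ n, 0 ≤ ψ n) (hmono : ∀ m n : ℕ, m ≤ n → ψ n ≤ ψ m)
    (hlim : C < Filter.limsup (fun N : ℕ => ∑ n ∈ Finset.Ioc N (2 ^ N), ψ n)
      Filter.atTop)
    (φ : ℕ → ℝ) (hφ : ∀ n, φ n = min (ψ n) (C / n)) :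
    (∀ m n : ℕ, 1 ≤ m → m ≤ n → φ n ≤ φ m) ∧
      C / 2 ≤ Filter.limsup (fun N : ℕ => ∑ n ∈ Finset.Ioc N (2 ^ N), φ n)
        Filter.atTop := by
  have hφ_le : ∀ n, φ n ≤ ψ n := fun n => by rw [hφ n]; exact min_le_left _ _
  constructor
  · intro m n hm hmn
    rw [hφ m, hφ n]
    refine min_le_min (hmono m n hmn) ?_
    have hm' : (0:ℝ) < m := by exact_mod_cast Nat.lt_of_lt_of_le Nat.zero_lt_one hm
    exact div_le_div_of_nonneg_left hC.le hm' (by exact_mod_cast hmn)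
  set g := fun N : ℕ => ∑ n ∈ Finset.Ioc N (2 ^ N), ψ n with hg
  set f := fun N : ℕ => ∑ n ∈ Finset.Ioc N (2 ^ N), φ n with hf
  have hfg : ∀ N, f N ≤ g N := fun N => Finset.sum_le_sum fun n _ => hφ_le n
  -- g is eventually bounded above, otherwise limsup would be 0 < C
  have hbg : ∃ a : ℝ, ∀ᶠ N in atTop, g N ≤ a := by
    by_contra h
    push_neg at h
    have hempty : {a : ℝ | ∀ᶠ N in atTop, g N ≤ a} = ∅ :=
      Set.eq_empty_iff_forall_notMem.mpr fun a ha => h a (ha.mono fun N hN => not_lt.mpr hN)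
    rw [Filter.limsup_eq, hempty, Real.sInf_empty] at hlim
    linarith
  have hbf : IsBoundedUnder (· ≤ ·) atTop f := by
    obtain ⟨a, ha⟩ := hbg
    exact ⟨a, eventually_map.mpr (ha.mono fun N h => (hfg N).trans h)⟩
  by_cases hcase : ∀ m : ℕ, ∃ n, m ≤ n ∧ C / n ≤ ψ n
  · -- there are arbitrarily large n with ψ n ≥ C/n
    have hfreq : ∀ ε : ℝ, 0 < ε → C / 2 - ε ≤ limsup f atTop := by
      intro ε hε
      refine le_limsup_of_frequently_le ?_ hbf
      rw [frequently_atTop]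
      intro M
      have htend : Tendsto (fun N : ℕ => (N : ℝ) * C / 2 ^ (N + 1)) atTop (nhds 0) := by
        have h0 : Tendsto (fun N : ℕ => (N : ℝ) * (1/2 : ℝ) ^ N) atTop (nhds 0) :=
          tendsto_self_mul_const_pow_of_lt_one (by norm_num) (by norm_num)
        have h1 : Tendsto (fun N : ℕ => (C / 2) * ((N : ℝ) * (1/2 : ℝ) ^ N)) atTop
            (nhds ((C / 2) * 0)) := h0.const_mul _
        rw [mul_zero] at h1
        convert h1 using 2 with N
        rw [div_pow, one_pow, pow_succ]
        field_simp
      obtain ⟨M₀, hM₀⟩ := eventually_atTop.mp (htend.eventually (eventually_lt_nhds hε))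
      obtain ⟨n, hn, hψn⟩ := hcase (2 ^ (max M M₀ + 1))
      have hnpos : 0 < n := lt_of_lt_of_le (Nat.pow_pos (by norm_num)) hn
      set N := Nat.log 2 n with hN
      have hKN : max M M₀ + 1 ≤ N :=
        (Nat.le_log_iff_pow_le (by norm_num) hnpos.ne').mpr hn
      have hMN : M ≤ N := le_trans (le_trans (le_max_left _ _) (Nat.le_succ _)) hKN
      have hM₀N : M₀ ≤ N := le_trans (le_trans (le_max_right _ _) (Nat.le_succ _)) hKN
      have h2N_le : 2 ^ N ≤ n := Nat.pow_log_le_self 2 hnpos.ne'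
      have hn_lt : n < 2 ^ (N + 1) := Nat.lt_pow_succ_log_self (by norm_num) n
      have hNlt : N < 2 ^ N := Nat.lt_two_pow_self (n := N)
      refine ⟨N, hMN, ?_⟩
      have hterm : ∀ m ∈ Finset.Ioc N (2 ^ N), C / n ≤ φ m := by
        intro m hm
        obtain ⟨h1, h2⟩ := Finset.mem_Ioc.mp hm
        have hmn : m ≤ n := h2.trans h2N_le
        have hmpos : (0:ℝ) < m := by
          exact_mod_cast lt_of_le_of_lt (Nat.zero_le N) h1
        rw [hφ m]
        refine le_min (le_trans hψn (hmono m n hmn)) ?_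
        exact div_le_div_of_nonneg_left hC.le hmpos (by exact_mod_cast hmn)
      have hsum : ((2 ^ N - N : ℕ) : ℝ) * (C / n) ≤ f N := by
        have h := Finset.sum_le_sum hterm
        rwa [Finset.sum_const, Nat.card_Ioc, nsmul_eq_mul] at h
      have hcast : ((2 ^ N - N : ℕ) : ℝ) = 2 ^ N - N := by
        push_cast [Nat.cast_sub hNlt.le]
        ring
      have hdiv : C / 2 ^ (N + 1) ≤ C / n := by
        apply div_le_div_of_nonneg_left hC.le (by exact_mod_cast hnpos)
        exact_mod_cast hn_lt.le
      have hfac : (0:ℝ) ≤ 2 ^ N - N := by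
        rw [← hcast]; positivity
      have hmid : ((2:ℝ) ^ N - N) * (C / 2 ^ (N + 1)) ≤ ((2:ℝ) ^ N - N) * (C / n) :=
        mul_le_mul_of_nonneg_left hdiv hfac
      have heq : ((2:ℝ) ^ N - N) * (C / 2 ^ (N + 1)) = C / 2 - (N : ℝ) * C / 2 ^ (N + 1) := by
        have h2 : (2:ℝ) ^ (N + 1) ≠ 0 := by positivity
        field_simp
        ring
      have hsmall : (N : ℝ) * C / 2 ^ (N + 1) < ε := hM₀ N hM₀N
      rw [hcast] at hsum
      calc C / 2 - ε ≤ C / 2 - (N : ℝ) * C / 2 ^ (N + 1) := by linarith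
        _ = ((2:ℝ) ^ N - N) * (C / 2 ^ (N + 1)) := heq.symm
        _ ≤ ((2:ℝ) ^ N - N) * (C / n) := hmid
        _ ≤ f N := hsum
    have : ∀ ε : ℝ, 0 < ε → C / 2 ≤ limsup f atTop + ε := fun ε hε => by
      linarith [hfreq ε hε]
    exact le_of_forall_pos_le_add this
  · -- eventually ψ n < C / n, so f and g eventually agree
    push_neg at hcase
    obtain ⟨m, hm⟩ := hcase
    have hcong : ∀ᶠ N in atTop, f N = g N := by
      filter_upwards [eventually_ge_atTop m] with N hN
      refine Finset.sum_congr rfl fun n hn => ?_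
      have hlt : ψ n < C / n := hm n (hN.trans (Finset.mem_Ioc.mp hn).1.le)
      rw [hφ n]
      exact min_eq_left hlt.le
    rw [Filter.limsup_congr hcong]
    linarith
end

section
/- There exists a nonincreasing function ψ : ℕ → ℝ≥0 such that ∑_{n∈ℕ} ψ(n) = ∞ while limsup_{N→∞} ∑_{N < n ≤ 2^N} ψ(n) = 0. -/
open Filter Finset


private def MM : ℕ → ℕ
  | 0 => 1
  | j+1 => 2 ^ MM j

private lemma MM_pos (j : ℕ) : 0 < MM j := by
  cases j with
  | zero => simp [MM]
  | succ j => simp [MM]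

private lemma MM_strictMono : StrictMono MM := by
  apply strictMono_nat_of_lt_succ
  intro n
  show MM n < 2 ^ MM n
  exact Nat.lt_two_pow_self

private lemma le_MM (n : ℕ) : n ≤ MM n := MM_strictMono.le_apply

private lemma two_mul_le_two_pow {m : ℕ} (h : 1 ≤ m) : 2 * m ≤ 2 ^ m := by
  induction m, h using Nat.le_induction with
  | base => simp
  | succ m hm ih =>
    calc 2 * (m+1) = 2 * m + 2 := by ring
    _ ≤ 2 ^ m + 2 ^ m := by
        have : 2 ≤ 2 ^ m := Nat.one_lt_two_pow_iff.mpr (by omega)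
        omega
    _ = 2 ^ (m+1) := by ring

private lemma MM_double (j : ℕ) : 2 * MM j ≤ MM (j+1) :=
  two_mul_le_two_pow (MM_pos j)

private lemma exJ (n : ℕ) : ∃ j, n ≤ MM j := ⟨n, le_MM n⟩

private noncomputable def JJ (n : ℕ) : ℕ := Nat.find (exJ n)

private lemma JJ_spec (n : ℕ) : n ≤ MM (JJ n) := Nat.find_spec (exJ n)

private lemma JJ_le {n j : ℕ} (h : n ≤ MM j) : JJ n ≤ j := Nat.find_le h

private lemma JJ_mono : Monotone JJ := by
  intro m n hmn
  exact JJ_le (hmn.trans (JJ_spec n))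

private lemma JJ_eq {n j : ℕ} (h1 : MM j < n) (h2 : n ≤ MM (j+1)) : JJ n = j + 1 := by
  have hle := JJ_le h2
  have : ¬ JJ n ≤ j := by
    intro hc
    exact absurd (JJ_spec n) (by
      have := MM_strictMono.monotone hc
      omega)
  omega

private noncomputable def psi (n : ℕ) : ℝ := 1 / (((JJ n : ℝ) + 1) * (MM (JJ n) : ℝ))

private lemma psi_nonneg (n : ℕ) : 0 ≤ psi n := by
  unfold psi
  positivity

private lemma psi_anti {m n : ℕ} (h : m ≤ n) : psi n ≤ psi m := by
  unfold psi
  have hJ := JJ_mono h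
  have h1 : (0:ℝ) < ((JJ m : ℝ) + 1) * (MM (JJ m) : ℝ) := by
    have := MM_pos (JJ m); positivity
  apply one_div_le_one_div_of_le h1
  have hM : (MM (JJ m) : ℝ) ≤ (MM (JJ n) : ℝ) := by
    exact_mod_cast MM_strictMono.monotone hJ
  have hj : ((JJ m : ℝ) + 1) ≤ ((JJ n : ℝ) + 1) := by
    have : (JJ m : ℝ) ≤ JJ n := by exact_mod_cast hJ
    linarith
  have := MM_pos (JJ m)
  have h0 : (0:ℝ) ≤ (MM (JJ m) : ℝ) := by positivity
  apply mul_le_mul hj hM h0 (by positivity)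

private lemma psi_on_block {j n : ℕ} (h1 : MM j < n) (h2 : n ≤ MM (j+1)) :
    psi n = 1 / (((j:ℝ) + 2) * (MM (j+1) : ℝ)) := by
  unfold psi
  rw [JJ_eq h1 h2]
  push_cast
  ring_nf

private lemma block_sum (j : ℕ) :
    ∑ n ∈ Finset.Ioc (MM j) (MM (j+1)), psi n
      = ((MM (j+1) - MM j : ℕ) : ℝ) / (((j:ℝ) + 2) * (MM (j+1) : ℝ)) := by
  have hcong : ∀ n ∈ Finset.Ioc (MM j) (MM (j+1)), psi n = 1 / (((j:ℝ) + 2) * (MM (j+1) : ℝ)) := by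
    intro n hn
    rw [Finset.mem_Ioc] at hn
    exact psi_on_block hn.1 hn.2
  rw [Finset.sum_congr rfl hcong, Finset.sum_const, Nat.card_Ioc]
  rw [nsmul_eq_mul]
  ring

private lemma block_lower (j : ℕ) :
    1 / (2 * ((j:ℝ) + 2)) ≤ ∑ n ∈ Finset.Ioc (MM j) (MM (j+1)), psi n := by
  rw [block_sum]
  have hle : MM j ≤ MM (j+1) := (MM_strictMono (Nat.lt_succ_self j)).le
  rw [Nat.cast_sub hle]
  have hdouble : 2 * (MM j : ℝ) ≤ (MM (j+1) : ℝ) := by exact_mod_cast MM_double j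
  have hpos : (0:ℝ) < MM (j+1) := by exact_mod_cast MM_pos (j+1)
  rw [div_le_div_iff₀ (by positivity) (by positivity)]
  nlinarith

private lemma block_upper (j : ℕ) :
    ∑ n ∈ Finset.Ioc (MM j) (MM (j+1)), psi n ≤ 1 / ((j:ℝ) + 2) := by
  rw [block_sum]
  have hle : MM j ≤ MM (j+1) := (MM_strictMono (Nat.lt_succ_self j)).le
  rw [Nat.cast_sub hle]
  have hpos : (0:ℝ) < MM (j+1) := by exact_mod_cast MM_pos (j+1)
  have hpos0 : (0:ℝ) < MM j := by exact_mod_cast MM_pos j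
  rw [div_le_div_iff₀ (by positivity) (by positivity)]
  nlinarith

private lemma partial_lower (j : ℕ) :
    ∑ k ∈ Finset.range j, 1 / (2 * ((k:ℝ) + 2)) ≤ ∑ n ∈ Finset.Ioc (MM 0) (MM j), psi n := by
  induction j with
  | zero => simp
  | succ j ih =>
    have hsplit : (∑ n ∈ Finset.Ioc (MM 0) (MM j), psi n)
        + ∑ n ∈ Finset.Ioc (MM j) (MM (j+1)), psi n
        = ∑ n ∈ Finset.Ioc (MM 0) (MM (j+1)), psi n :=
      Finset.sum_Ioc_consecutive _ (MM_strictMono.monotone (Nat.zero_le j))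
        (MM_strictMono (Nat.lt_succ_self j)).le
    rw [Finset.sum_range_succ, ← hsplit]
    exact add_le_add ih (block_lower j)

private lemma psi_not_summable : ¬ Summable psi := by
  intro h
  set C := ∑' n, psi n with hC
  have hb : ∀ j : ℕ, ∑ k ∈ Finset.range j, 1 / (2 * ((k:ℝ) + 2)) ≤ C := fun j =>
    (partial_lower j).trans (Summable.sum_le_tsum _ (fun n _ => psi_nonneg n) h)
  have key : ∀ j : ℕ, ∑ i ∈ Finset.range (j+1), 1 / ((i:ℝ) + 1) ≤ 2 * C + 1 := by
    intro j
    have h2 : ∑ i ∈ Finset.range (j+1), 1 / ((i:ℝ) + 1)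
        = (∑ k ∈ Finset.range j, 1 / ((k:ℝ) + 2)) + 1 := by
      rw [Finset.sum_range_succ']
      have hc : ∀ k ∈ Finset.range j, 1 / (((k+1:ℕ):ℝ) + 1) = 1 / ((k:ℝ) + 2) :=
        fun k _ => by push_cast; ring
      rw [Finset.sum_congr rfl hc]
      norm_num
    have h3 : ∑ k ∈ Finset.range j, 1 / (2 * ((k:ℝ) + 2))
        = (1/2) * ∑ k ∈ Finset.range j, 1 / ((k:ℝ) + 2) := by
      rw [Finset.mul_sum]
      exact Finset.sum_congr rfl fun k _ => (one_div_mul_one_div 2 ((k:ℝ)+2)).symm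
    have h1 := hb j
    rw [h3] at h1
    linarith
  have hdiv := Real.tendsto_sum_range_one_div_nat_succ_atTop
  obtain ⟨n, hn1, hn2⟩ :=
    ((hdiv.eventually_gt_atTop (2 * C + 1)).and (eventually_ge_atTop 1)).exists
  cases n with
  | zero => omega
  | succ j => exact absurd (key j) (not_le.mpr hn1)

private lemma JJ_tendsto : Tendsto JJ atTop atTop := by
  apply tendsto_atTop_atTop_of_monotone JJ_mono
  intro b
  refine ⟨MM b + 1, ?_⟩
  by_contra hc
  push_neg at hc
  have h1 := JJ_spec (MM b + 1)
  have h2 : MM (JJ (MM b + 1)) ≤ MM b := MM_strictMono.monotone (by omega)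
  omega

private lemma window_le (N : ℕ) :
    ∑ n ∈ Finset.Ioc N (2 ^ N), psi n ≤ 2 / ((JJ N : ℝ) + 1) := by
  set j := JJ N with hj
  have hN : N ≤ MM j := JJ_spec N
  have hjj : MM j ≤ MM (j+1) := (MM_strictMono (Nat.lt_succ_self j)).le
  have h2N : 2 ^ N ≤ MM (j+1) := by
    calc 2 ^ N ≤ 2 ^ MM j := Nat.pow_le_pow_right (by norm_num) hN
    _ = MM (j+1) := rfl
  have h1 : ∑ n ∈ Finset.Ioc N (2^N), psi n ≤ ∑ n ∈ Finset.Ioc N (MM (j+1)), psi n :=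
    Finset.sum_le_sum_of_subset_of_nonneg (Finset.Ioc_subset_Ioc_right h2N)
      (fun n _ _ => psi_nonneg n)
  have hsplit : (∑ n ∈ Finset.Ioc N (MM j), psi n)
      + ∑ n ∈ Finset.Ioc (MM j) (MM (j+1)), psi n
      = ∑ n ∈ Finset.Ioc N (MM (j+1)), psi n :=
    Finset.sum_Ioc_consecutive _ hN hjj
  have hA : ∑ n ∈ Finset.Ioc N (MM j), psi n ≤ 1 / ((j:ℝ) + 1) := by
    have hval : ∀ n ∈ Finset.Ioc N (MM j), psi n = 1 / (((j:ℝ) + 1) * (MM j : ℝ)) := by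
      intro n hn
      rw [Finset.mem_Ioc] at hn
      have hJn : JJ n = j := le_antisymm (JJ_le hn.2) (hj ▸ JJ_mono hn.1.le)
      unfold psi
      rw [hJn]
    rw [Finset.sum_congr rfl hval, Finset.sum_const, Nat.card_Ioc, nsmul_eq_mul]
    have hMpos : (0:ℝ) < MM j := by exact_mod_cast MM_pos j
    have hcard : ((MM j - N : ℕ):ℝ) ≤ (MM j : ℝ) := by
      exact_mod_cast Nat.sub_le (MM j) N
    calc ((MM j - N : ℕ):ℝ) * (1 / (((j:ℝ)+1) * (MM j:ℝ)))
        ≤ (MM j : ℝ) * (1 / (((j:ℝ)+1) * (MM j:ℝ))) :=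
          mul_le_mul_of_nonneg_right hcard (by positivity)
    _ = 1 / ((j:ℝ)+1) := by field_simp
  have hB : ∑ n ∈ Finset.Ioc (MM j) (MM (j+1)), psi n ≤ 1 / ((j:ℝ) + 1) := by
    refine (block_upper j).trans ?_
    apply one_div_le_one_div_of_le (by positivity)
    linarith
  have harith : 2 / ((j:ℝ) + 1) = 1 / ((j:ℝ)+1) + 1 / ((j:ℝ)+1) := by ring
  rw [harith]
  linarith

private lemma window_tendsto :
    Tendsto (fun N : ℕ => ∑ n ∈ Finset.Ioc N (2 ^ N), psi n) atTop (nhds 0) := by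
  apply squeeze_zero (fun N => Finset.sum_nonneg fun n _ => psi_nonneg n) window_le
  have h1 : Tendsto (fun j : ℕ => 2 / ((j:ℝ) + 1)) atTop (nhds 0) := by
    have h2 : Tendsto (fun n : ℕ => 2 * (1 / ((n:ℝ) + 1))) atTop (nhds (2 * 0)) :=
      tendsto_one_div_add_atTop_nhds_zero_nat.const_mul 2
    simpa only [mul_one_div, mul_zero] using h2
  exact h1.comp JJ_tendsto

/-- There is a nonincreasing `ψ : ℕ → ℝ≥0` with `∑_n ψ(n) = ∞` while
`limsup_{N→∞} ∑_{N < n ≤ 2^N} ψ(n) = 0`. -/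
theorem stmt_17 :
    ∃ ψ : ℕ → ℝ, (∀ n, 0 ≤ ψ n) ∧ (∀ m n : ℕ, m ≤ n → ψ n ≤ ψ m) ∧
      ¬ Summable ψ ∧
      Filter.limsup (fun N : ℕ => ∑ n ∈ Finset.Ioc N (2 ^ N), ψ n)
        Filter.atTop = 0 := by
  exact ⟨psi, psi_nonneg, fun m n h => psi_anti h, psi_not_summable,
    window_tendsto.limsup_eq⟩
end

section
/- Let the Farey lengths be ℓ_{a,q} := 2/q² counted over all reduced fractions a/q ∈ [0,1) with q ≥ 1 and gcd(a,q)=1, ordered so that the resulting sequence (ℓ_n)_{n∈ℕ} is nonincreasing. Then ∑_{n=1}^∞ (1/n²) exp(∑_{k ≤ n} ℓ_k) < ∞. -/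
open Finset

-- totient of even number
lemma tot_two_mul (m : ℕ) : Nat.totient (2 * m) ≤ m := by
  rw [Nat.totient]
  apply Finset.card_le_card_of_injOn (fun a => a / 2) ?_ ?_ |>.trans (Finset.card_range m).le
  · intro a ha
    simp only [Finset.mem_coe, Finset.mem_filter, Finset.mem_range] at ha ⊢
    exact Nat.div_lt_iff_lt_mul (k := 2) (by norm_num) |>.mpr (by omega)
  · intro a ha b hb hab
    simp only [Finset.mem_filter, Finset.mem_range, Finset.coe_filter, Set.mem_setOf_eq] at ha hb
    have ha2 : a % 2 = 1 := by
      rcases Nat.mod_two_eq_zero_or_one a with h | h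
      · exfalso
        have : 2 ∣ Nat.gcd (2*m) a := Nat.dvd_gcd ⟨m, rfl⟩ (Nat.dvd_of_mod_eq_zero h)
        rw [ha.2] at this; omega
      · exact h
    have hb2 : b % 2 = 1 := by
      rcases Nat.mod_two_eq_zero_or_one b with h | h
      · exfalso
        have : 2 ∣ Nat.gcd (2*m) b := Nat.dvd_gcd ⟨m, rfl⟩ (Nat.dvd_of_mod_eq_zero h)
        rw [hb.2] at this; omega
      · exact h
    have hab2 : a / 2 = b / 2 := hab
    omega

lemma pair_sum (g : ℕ → ℝ) (M : ℕ) :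
    ∑ q ∈ Finset.Icc 1 (2 * M), g q = ∑ j ∈ Finset.range M, (g (2*j+1) + g (2*j+2)) := by
  induction M with
  | zero => simp
  | succ M ih =>
    have h1 : 2 * (M + 1) = (2 * M + 1) + 1 := by ring
    rw [h1, Finset.sum_Icc_succ_top (by omega), Finset.sum_Icc_succ_top (by omega),
      Finset.sum_range_succ, ih]
    norm_num
    ring

lemma sq_sum_le (M : ℕ) : ∑ j ∈ Finset.range M, (1:ℝ)/((j:ℝ)+1)^2 ≤ 2 := by
  have h : ∀ j ∈ Finset.range M, (1:ℝ)/((j:ℝ)+1)^2 ≤ 2 * (1/((j:ℝ)+1) - 1/((j:ℝ)+1+1)) := by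
    intro j _
    have hj : (0:ℝ) < (j:ℝ)+1 := by positivity
    have key : (1:ℝ)/((j:ℝ)+1)^2 ≤ 2/(((j:ℝ)+1)*((j:ℝ)+1+1)) := by
      rw [div_le_div_iff₀ (by positivity) (by positivity)]; nlinarith
    have h2 : 2*((1:ℝ)/((j:ℝ)+1) - 1/((j:ℝ)+1+1)) = 2/(((j:ℝ)+1)*((j:ℝ)+1+1)) := by
      field_simp
      ring
    linarith
  calc ∑ j ∈ Finset.range M, (1:ℝ)/((j:ℝ)+1)^2
      ≤ ∑ j ∈ Finset.range M, 2 * (1/((j:ℝ)+1) - 1/((j:ℝ)+1+1)) := Finset.sum_le_sum h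
    _ = 2 * ∑ j ∈ Finset.range M, ((fun j : ℕ => 1/((j:ℝ)+1)) j - (fun j : ℕ => 1/((j:ℝ)+1)) (j+1)) := by
        rw [Finset.mul_sum]
        exact Finset.sum_congr rfl fun j _ => by push_cast; ring
    _ = 2 * ((1:ℝ)/(((0:ℕ):ℝ)+1) - 1/((M:ℝ)+1)) := by
        rw [Finset.sum_range_sub' (fun j : ℕ => 1/((j:ℝ)+1))]
    _ ≤ 2 := by
        have : (0:ℝ) ≤ 1/((M:ℝ)+1) := by positivity
        norm_num; linarith

lemma harm_le (M : ℕ) : ∑ j ∈ Finset.range M, (1:ℝ)/((j:ℝ)+1) ≤ 1 + Real.log M := by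
  have := harmonic_le_one_add_log M
  have he : ((harmonic M : ℚ) : ℝ) = ∑ j ∈ Finset.range M, (1:ℝ)/((j:ℝ)+1) := by
    rw [harmonic]; push_cast; simp [one_div]
  linarith [he ▸ this]

lemma per_j (x : ℝ) (hx : 0 ≤ x) :
    2/(2*x+1) + 1/(2*(x+1)) ≤ 3/2*(1/(x+1)) + 2*(1/(x+1)^2) := by
  have h1 : (0:ℝ) < 2*x+1 := by linarith
  have h2 : (0:ℝ) < x+1 := by linarith
  have e1 : 2/(2*x+1) ≤ (x+3)/(x+1)^2 := by
    rw [div_le_div_iff₀ h1 (by positivity)]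
    nlinarith
  have e2 : (x+3)/(x+1)^2 = 1/(x+1) + 2*(1/(x+1)^2) := by
    field_simp
    ring
  have e3 : 3/2*(1/(x+1)) = 1/(2*(x+1)) + 1/(x+1) := by
    field_simp
    ring
  linarith [e2 ▸ e1]

lemma key_bound (e : ℕ → ℕ × ℕ) (hinj : Function.Injective e)
    (hmem : ∀ n : ℕ, 1 ≤ (e n).2 ∧ (e n).1 < (e n).2 ∧ Nat.gcd (e n).1 (e n).2 = 1)
    (ℓ : ℕ → ℝ) (hℓ : ∀ n, ℓ n = 2 / ((e n).2 : ℝ) ^ 2) (n : ℕ) :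
    ∑ k ∈ Finset.range (n + 1), ℓ k ≤ 9 + (3/4) * Real.log ((n:ℝ)+1) := by
  set Q := Nat.sqrt n with hQdef
  set M := (Q+1)/2 with hMdef
  -- fiber cardinality bound
  have hfib : ∀ q : ℕ, ((Finset.range (n+1)).filter (fun k => (e k).2 = q)).card ≤ q.totient := by
    intro q
    rw [Nat.totient]
    apply Finset.card_le_card_of_injOn (fun k => (e k).1)
    · intro k hk
      simp only [Finset.mem_coe, Finset.mem_filter, Finset.mem_range] at hk ⊢
      obtain ⟨h1, h2, h3⟩ := hmem k
      refine ⟨hk.2 ▸ h2, ?_⟩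
      unfold Nat.Coprime
      rw [Nat.gcd_comm, ← hk.2]
      exact h3
    · intro a ha b hb hab
      simp only [Finset.coe_filter, Finset.mem_range, Set.mem_setOf_eq] at ha hb
      exact hinj (Prod.ext hab (ha.2.trans hb.2.symm))
  set A := (Finset.range (n+1)).filter (fun k => (e k).2 ≤ Q) with hAdef
  -- A-part
  have hA : ∑ k ∈ A, ℓ k ≤ ∑ q ∈ Finset.Icc 1 Q, (q.totient : ℝ) * (2/(q:ℝ)^2) := by
    have hmaps : ∀ k ∈ A, (e k).2 ∈ Finset.Icc 1 Q := by
      intro k hk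
      simp only [hAdef, Finset.mem_filter, Finset.mem_range] at hk
      exact Finset.mem_Icc.mpr ⟨(hmem k).1, hk.2⟩
    calc ∑ k ∈ A, ℓ k = ∑ k ∈ A, (fun q : ℕ => 2/(q:ℝ)^2) ((e k).2) :=
          Finset.sum_congr rfl fun k _ => hℓ k
      _ = ∑ q ∈ Finset.Icc 1 Q, ∑ k ∈ A.filter (fun k => (e k).2 = q), (2/(q:ℝ)^2) :=
          (Finset.sum_fiberwise_of_maps_to' hmaps (fun q : ℕ => 2/(q:ℝ)^2)).symm
      _ = ∑ q ∈ Finset.Icc 1 Q, ((A.filter (fun k => (e k).2 = q)).card : ℝ) * (2/(q:ℝ)^2) := by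
          simp [Finset.sum_const, nsmul_eq_mul]
      _ ≤ ∑ q ∈ Finset.Icc 1 Q, (q.totient : ℝ) * (2/(q:ℝ)^2) := by
          apply Finset.sum_le_sum
          intro q hq
          apply mul_le_mul_of_nonneg_right _ (by positivity)
          have hsub : A.filter (fun k => (e k).2 = q)
              ⊆ (Finset.range (n+1)).filter (fun k => (e k).2 = q) := by
            intro k hk
            simp only [hAdef, Finset.mem_filter, Finset.mem_range] at hk ⊢
            exact ⟨hk.1.1, hk.2⟩
          exact_mod_cast (Finset.card_le_card hsub).trans (hfib q)
  -- B-part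
  have hsq : n + 1 ≤ (Q+1)^2 := by
    rw [pow_two]
    exact Nat.lt_succ_sqrt n
  have hB : ∑ k ∈ (Finset.range (n+1)).filter (fun k => ¬ (e k).2 ≤ Q), ℓ k ≤ 2 := by
    have hbd : ∀ k ∈ (Finset.range (n+1)).filter (fun k => ¬ (e k).2 ≤ Q),
        ℓ k ≤ 2/((Q:ℝ)+1)^2 := by
      intro k hk
      simp only [Finset.mem_filter, Finset.mem_range, not_le] at hk
      rw [hℓ]
      have h1 : (Q:ℝ)+1 ≤ ((e k).2 : ℝ) := by exact_mod_cast hk.2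
      gcongr
    calc ∑ k ∈ (Finset.range (n+1)).filter (fun k => ¬ (e k).2 ≤ Q), ℓ k
        ≤ ((Finset.range (n+1)).filter (fun k => ¬ (e k).2 ≤ Q)).card • (2/((Q:ℝ)+1)^2) :=
          Finset.sum_le_card_nsmul _ _ _ hbd
      _ ≤ (n+1 : ℝ) * (2/((Q:ℝ)+1)^2) := by
          rw [nsmul_eq_mul]
          apply mul_le_mul_of_nonneg_right _ (by positivity)
          exact_mod_cast (Finset.card_filter_le _ _).trans (Finset.card_range (n+1)).le
      _ ≤ ((Q:ℝ)+1)^2 * (2/((Q:ℝ)+1)^2) := by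
          have hc : ((n:ℝ)+1) ≤ ((Q:ℝ)+1)^2 := by exact_mod_cast hsq
          exact mul_le_mul_of_nonneg_right hc (by positivity)
      _ = 2 := by field_simp
  -- middle chain
  have hC : ∑ q ∈ Finset.Icc 1 Q, (q.totient : ℝ) * (2/(q:ℝ)^2)
      ≤ ∑ q ∈ Finset.Icc 1 (2*M), (q.totient : ℝ) * (2/(q:ℝ)^2) := by
    apply Finset.sum_le_sum_of_subset_of_nonneg
    · exact Finset.Icc_subset_Icc_right (by omega)
    · intro q _ _
      positivity
  have hD : ∑ q ∈ Finset.Icc 1 (2*M), (q.totient : ℝ) * (2/(q:ℝ)^2)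
      = ∑ j ∈ Finset.range M, (((2*j+1).totient : ℝ) * (2/((2*j+1:ℕ):ℝ)^2)
        + ((2*j+2).totient : ℝ) * (2/((2*j+2:ℕ):ℝ)^2)) :=
    pair_sum (fun q => (q.totient : ℝ) * (2/(q:ℝ)^2)) M
  have hE : ∑ j ∈ Finset.range M, (((2*j+1).totient : ℝ) * (2/((2*j+1:ℕ):ℝ)^2)
        + ((2*j+2).totient : ℝ) * (2/((2*j+2:ℕ):ℝ)^2))
      ≤ ∑ j ∈ Finset.range M, (3/2*(1/((j:ℝ)+1)) + 2*(1/((j:ℝ)+1)^2)) := by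
    apply Finset.sum_le_sum
    intro j _
    set x := (j:ℝ) with hxdef
    have hx : 0 ≤ x := Nat.cast_nonneg j
    have c1 : ((2*j+1:ℕ):ℝ) = 2*x+1 := by push_cast; ring
    have c2 : ((2*j+2:ℕ):ℝ) = 2*(x+1) := by push_cast; ring
    have t1 : ((2*j+1).totient : ℝ) ≤ 2*x+1 := by
      rw [← c1]; exact_mod_cast Nat.totient_le _
    have t2 : ((2*j+2).totient : ℝ) ≤ x+1 := by
      have : (2*j+2).totient ≤ j+1 := by
        have := tot_two_mul (j+1)
        rwa [show 2*(j+1) = 2*j+2 by ring] at this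
      calc ((2*j+2).totient : ℝ) ≤ ((j+1:ℕ):ℝ) := by exact_mod_cast this
        _ = x+1 := by push_cast; ring
    have h1 : (0:ℝ) < 2*x+1 := by linarith
    have h2 : (0:ℝ) < x+1 := by linarith
    have b1 : ((2*j+1).totient : ℝ) * (2/((2*j+1:ℕ):ℝ)^2) ≤ 2/(2*x+1) := by
      rw [c1]
      rw [show (2:ℝ)/(2*x+1) = (2*x+1) * (2/(2*x+1)^2) by field_simp]
      exact mul_le_mul_of_nonneg_right t1 (by positivity)
    have b2 : ((2*j+2).totient : ℝ) * (2/((2*j+2:ℕ):ℝ)^2) ≤ 1/(2*(x+1)) := by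
      rw [c2]
      rw [show (1:ℝ)/(2*(x+1)) = (x+1) * (2/(2*(x+1))^2) by field_simp]
      exact mul_le_mul_of_nonneg_right t2 (by positivity)
    linarith [per_j x hx]
  -- harmonic bounds
  have hF : ∑ j ∈ Finset.range M, (3/2*(1/((j:ℝ)+1)) + 2*(1/((j:ℝ)+1)^2))
      ≤ 3/2 * ∑ j ∈ Finset.range (Q+1), (1:ℝ)/((j:ℝ)+1) + 4 := by
    rw [Finset.sum_add_distrib]
    have h1 : ∑ j ∈ Finset.range M, 3/2*(1/((j:ℝ)+1))
        ≤ 3/2 * ∑ j ∈ Finset.range (Q+1), (1:ℝ)/((j:ℝ)+1) := by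
      rw [← Finset.mul_sum]
      apply mul_le_mul_of_nonneg_left _ (by norm_num)
      apply Finset.sum_le_sum_of_subset_of_nonneg
      · exact Finset.range_subset_range.mpr (by omega)
      · intro j _ _
        positivity
    have h2 : ∑ j ∈ Finset.range M, 2*(1/((j:ℝ)+1)^2) ≤ 4 := by
      rw [← Finset.mul_sum]
      nlinarith [sq_sum_le M]
    linarith
  have hG : ∑ j ∈ Finset.range (Q+1), (1:ℝ)/((j:ℝ)+1) ≤ 1 + Real.log ((Q:ℝ)+1) := by
    have := harm_le (Q+1)
    push_cast at this
    exact this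
  have hH : Real.log ((Q:ℝ)+1) ≤ Real.log 2 + (1/2) * Real.log ((n:ℝ)+1) := by
    have hq1 : (Q:ℝ) ≤ Real.sqrt ((n:ℝ)) := by
      rw [show (Q:ℝ) = Real.sqrt ((Q:ℝ)^2) by rw [Real.sqrt_sq (Nat.cast_nonneg Q)]]
      apply Real.sqrt_le_sqrt
      exact_mod_cast Nat.sqrt_le' n
    have hq2 : Real.sqrt ((n:ℝ)) ≤ Real.sqrt ((n:ℝ)+1) := Real.sqrt_le_sqrt (by linarith)
    have hq3 : (1:ℝ) ≤ Real.sqrt ((n:ℝ)+1) :=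
      Real.one_le_sqrt.mpr (by have := Nat.cast_nonneg (α := ℝ) n; linarith)
    have hq : (Q:ℝ)+1 ≤ 2 * Real.sqrt ((n:ℝ)+1) := by linarith
    calc Real.log ((Q:ℝ)+1) ≤ Real.log (2 * Real.sqrt ((n:ℝ)+1)) :=
          Real.log_le_log (by positivity) hq
      _ = Real.log 2 + (1/2) * Real.log ((n:ℝ)+1) := by
          rw [Real.log_mul (by norm_num) (by positivity), Real.log_sqrt (by positivity)]
          ring
  -- assemble
  rw [← Finset.sum_filter_add_sum_filter_not (Finset.range (n+1)) (fun k => (e k).2 ≤ Q) ℓ]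
  have hlog2 : Real.log 2 ≤ 1 := by
    have := Real.log_le_sub_one_of_pos (by norm_num : (0:ℝ) < 2)
    linarith
  have hlogn : 0 ≤ Real.log ((n:ℝ)+1) := Real.log_nonneg (by push_cast; linarith)
  linarith

/-- Order the Farey lengths `ℓ_{a,q} = 2/q²` (over reduced fractions
`a/q ∈ [0,1)`, `q ≥ 1`, `gcd(a,q) = 1`) into a nonincreasing sequence `(ℓ_n)`. Then
`∑_{n≥1} (1/n²) exp(∑_{k ≤ n} ℓ_k) < ∞`. -/
theorem stmt_19 (e : ℕ → ℕ × ℕ) (hinj : Function.Injective e)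
    (hmem : ∀ n : ℕ, 1 ≤ (e n).2 ∧ (e n).1 < (e n).2 ∧ Nat.gcd (e n).1 (e n).2 = 1)
    (hsurj : ∀ a q : ℕ, 1 ≤ q → a < q → Nat.gcd a q = 1 → ∃ n : ℕ, e n = (a, q))
    (ℓ : ℕ → ℝ) (hℓ : ∀ n, ℓ n = 2 / ((e n).2 : ℝ) ^ 2)
    (hmono : ∀ m n : ℕ, m ≤ n → ℓ n ≤ ℓ m) :
    Summable (fun n : ℕ =>
      1 / ((n : ℝ) + 1) ^ 2 * Real.exp (∑ k ∈ Finset.range (n + 1), ℓ k)) := by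
  have hℓnn : ∀ k, 0 ≤ ℓ k := fun k => by rw [hℓ]; positivity
  have key := key_bound e hinj hmem ℓ hℓ
  have hsum : Summable (fun n : ℕ => Real.exp 9 * ((n:ℝ)+1)^(-(5/4:ℝ))) := by
    have hs : Summable (fun n : ℕ => ((n:ℝ))^(-(5/4:ℝ))) :=
      Real.summable_nat_rpow.mpr (by norm_num)
    have hs2 : Summable (fun n : ℕ => (((n+1:ℕ)):ℝ)^(-(5/4:ℝ))) :=
      (summable_nat_add_iff 1).mpr hs
    have : (fun n : ℕ => Real.exp 9 * ((n:ℝ)+1)^(-(5/4:ℝ)))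
        = fun n : ℕ => Real.exp 9 * (((n+1:ℕ)):ℝ)^(-(5/4:ℝ)) := by
      funext n; push_cast; ring_nf
    rw [this]
    exact hs2.mul_left _
  apply Summable.of_nonneg_of_le (fun n => by positivity) _ hsum
  intro n
  have hx : (0:ℝ) < (n:ℝ)+1 := by positivity
  have h1 : Real.exp (∑ k ∈ Finset.range (n+1), ℓ k)
      ≤ Real.exp 9 * ((n:ℝ)+1)^((3/4:ℝ)) := by
    rw [show ((n:ℝ)+1)^((3/4:ℝ)) = Real.exp ((3/4) * Real.log ((n:ℝ)+1)) by
      rw [Real.rpow_def_of_pos hx]; ring_nf]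
    rw [← Real.exp_add]
    exact Real.exp_le_exp.mpr (key n)
  calc 1/((n:ℝ)+1)^2 * Real.exp (∑ k ∈ Finset.range (n+1), ℓ k)
      ≤ 1/((n:ℝ)+1)^2 * (Real.exp 9 * ((n:ℝ)+1)^((3/4:ℝ))) :=
        mul_le_mul_of_nonneg_left h1 (by positivity)
    _ = Real.exp 9 * ((n:ℝ)+1)^(-(5/4:ℝ)) := by
        rw [show -(5/4:ℝ) = 3/4 - 2 by norm_num, Real.rpow_sub hx]
        rw [show ((n:ℝ)+1)^((2:ℝ)) = ((n:ℝ)+1)^(2:ℕ) by rw [← Real.rpow_natCast]; norm_num]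
        ring
end
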